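/- arXiv:1902.07912 — 10 statements merged into one kernel-verified Lean document; each statement's English description precedes it below -/
import Mathlib

section
/- Let 0 < λ < λ' < 1 and let (F_n) be a (1+λ)-bi-tempered two-sided Følner sequence in a countable group G. Then there exists n₀ such that the tail (F_n)_{n ≥ n₀} is λ'-good, i.e., for all n ≥ n₀: (1) |⋃_{n₀ ≤ i < n} F_i⁻¹ F_n \ F_n| ≤ λ'|F_n|, and (2) for all n₀ ≤ i < n and all f ∈ F_i, |F_n \ F_n f| < λ'|F_n| (with appropriate non-strict/strict inequalities as in the definition). -/
open scoped Pointwise symmDiff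
open Finset

lemma mul_singleton_eq_image {G : Type*} [Group G] [DecidableEq G] (s : Finset G) (a : G) :
    s * {a} = s.image (· * a) := by
  ext x
  simp only [Finset.mem_mul, Finset.mem_image, Finset.mem_singleton]
  constructor
  · rintro ⟨y, hy, z, rfl, rfl⟩; exact ⟨y, hy, rfl⟩
  · rintro ⟨y, hy, rfl⟩; exact ⟨y, hy, a, rfl, rfl⟩

lemma singleton_mul_eq_image {G : Type*} [Group G] [DecidableEq G] (s : Finset G) (a : G) :
    ({a} : Finset G) * s = s.image (a * ·) := by
  ext x
  simp only [Finset.mem_mul, Finset.mem_image, Finset.mem_singleton]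
  constructor
  · rintro ⟨y, rfl, z, hz, rfl⟩; exact ⟨z, hz, rfl⟩
  · rintro ⟨y, hy, rfl⟩; exact ⟨a, rfl, y, hy, rfl⟩

lemma card_sdiff_right' {G : Type*} [Group G] [DecidableEq G] (s : Finset G) (a : G) :
    (s \ (s * {a})).card = ((s * {a⁻¹}) \ s).card := by
  have himg : (s \ (s * {a})).image (· * a⁻¹) = (s * {a⁻¹}) \ s := by
    rw [Finset.image_sdiff _ _ (mul_left_injective a⁻¹)]
    rw [mul_singleton_eq_image, mul_singleton_eq_image, Finset.image_image]
    simp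
  rw [← himg, Finset.card_image_of_injective _ (mul_left_injective a⁻¹)]

lemma card_sdiff_left' {G : Type*} [Group G] [DecidableEq G] (s : Finset G) (a : G) :
    (s \ (({a⁻¹} : Finset G) * s)).card = ((({a} : Finset G) * s) \ s).card := by
  have himg : (s \ (({a⁻¹} : Finset G) * s)).image (a * ·) = (({a} : Finset G) * s) \ s := by
    rw [Finset.image_sdiff _ _ (mul_right_injective a)]
    rw [singleton_mul_eq_image, singleton_mul_eq_image, Finset.image_image]
    simp [Function.comp]
  rw [← himg, Finset.card_image_of_injective _ (mul_right_injective a)]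

theorem fluctuations_stmt2 {G : Type*} [Group G] [Countable G] [DecidableEq G]
    (F : ℕ → Finset G) (hne : ∀ n, (F n).Nonempty)
    (lam lam' : ℝ) (h0 : 0 < lam) (h1 : lam < lam') (h2 : lam' < 1)
    (hlt : ∀ n, ((((Finset.range n).biUnion fun i => (F i)⁻¹ * F n)).card : ℝ)
        ≤ (1 + lam) * (F n).card)
    (hrt : ∀ n, ((((Finset.range n).biUnion fun i => F n * (F i)⁻¹)).card : ℝ)
        ≤ (1 + lam) * (F n).card)
    (hlF : ∀ g : G, Filter.Tendsto
        (fun n => ((({g} * F n) ∆ F n).card : ℝ) / (F n).card) Filter.atTop (nhds 0))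
    (hrF : ∀ g : G, Filter.Tendsto
        (fun n => (((F n * {g}) ∆ F n).card : ℝ) / (F n).card) Filter.atTop (nhds 0)) :
    ∃ n₀ : ℕ, ∀ n, n₀ ≤ n →
      (((((Finset.Ico n₀ n).biUnion fun i => (F i)⁻¹ * F n)) \ F n).card : ℝ)
          ≤ lam' * (F n).card ∧
      ∀ i, n₀ ≤ i → i < n → ∀ f ∈ F i,
          ((F n \ (F n * {f})).card : ℝ) < lam' * (F n).card := by
  obtain ⟨g₀, hg₀⟩ := hne 0
  have hεpos : (0 : ℝ) < lam' - lam := by linarith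
  obtain ⟨N₁, hN₁⟩ := Filter.eventually_atTop.mp ((hlF g₀).eventually_lt_const hεpos)
  obtain ⟨N₂, hN₂⟩ := Filter.eventually_atTop.mp ((hrF g₀⁻¹).eventually_lt_const hεpos)
  refine ⟨max (max N₁ N₂) 1, fun n hn => ?_⟩
  have hcpos : (0 : ℝ) < ((F n).card : ℝ) := by
    exact_mod_cast Finset.card_pos.mpr (hne n)
  set c : ℝ := ((F n).card : ℝ) with hc
  have hn1 : 1 ≤ n := le_trans (le_max_right _ _) hn
  have h0n : (0 : ℕ) ∈ Finset.range n := Finset.mem_range.mpr hn1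
  have hL : ((({g₀} * F n) ∆ F n).card : ℝ) < (lam' - lam) * c := by
    have := hN₁ n (le_trans (le_trans (le_max_left _ _) (le_max_left _ _)) hn)
    rwa [div_lt_iff₀ hcpos] at this
  have hR : (((F n * {g₀⁻¹}) ∆ F n).card : ℝ) < (lam' - lam) * c := by
    have := hN₂ n (le_trans (le_trans (le_max_right _ _) (le_max_left _ _)) hn)
    rwa [div_lt_iff₀ hcpos] at this
  constructor
  · -- part 1
    set A := (Finset.range n).biUnion fun i => (F i)⁻¹ * F n with hA
    have hsub : ((Finset.Ico (max (max N₁ N₂) 1) n).biUnion fun i => (F i)⁻¹ * F n) \ F n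
        ⊆ A \ F n := by
      apply Finset.sdiff_subset_sdiff _ le_rfl
      apply Finset.biUnion_subset_biUnion_of_subset_left
      intro i hi
      rw [Finset.mem_Ico] at hi
      exact Finset.mem_range.mpr hi.2
    refine le_trans (Nat.cast_le.mpr (Finset.card_le_card hsub)) ?_
    have hsplit : ((A \ F n).card : ℝ) = (A.card : ℝ) - ((A ∩ F n).card : ℝ) := by
      rw [eq_sub_iff_add_eq]
      exact_mod_cast congrArg (Nat.cast (R := ℝ))
        ((Nat.add_comm _ _).trans (Finset.card_inter_add_card_sdiff A (F n)))
    have hAcard : (A.card : ℝ) ≤ (1 + lam) * c := hlt n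
    have hginA : ({g₀⁻¹} : Finset G) * F n ⊆ A := by
      refine le_trans ?_ (Finset.subset_biUnion_of_mem _ h0n)
      exact Finset.mul_subset_mul_right (Finset.singleton_subset_iff.mpr
        (Finset.inv_mem_inv hg₀))
    have hinter : c - (lam' - lam) * c ≤ ((A ∩ F n).card : ℝ) := by
      have h2' : ((F n ∩ (({g₀⁻¹} : Finset G) * F n)).card : ℝ)
          = c - ((F n \ (({g₀⁻¹} : Finset G) * F n)).card : ℝ) := by
        rw [eq_sub_iff_add_eq, hc]
        exact_mod_cast Finset.card_inter_add_card_sdiff (F n) (({g₀⁻¹} : Finset G) * F n)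
      have h3' : ((F n \ (({g₀⁻¹} : Finset G) * F n)).card : ℝ)
          ≤ ((({g₀} * F n) ∆ F n).card : ℝ) := by
        rw [card_sdiff_left' (F n) g₀]
        have hss : (({g₀} : Finset G) * F n) \ F n ⊆ ({g₀} * F n) ∆ F n := by
          rw [symmDiff_def]; exact Finset.subset_union_left
        exact_mod_cast Finset.card_le_card hss
      have h4' : ((F n ∩ (({g₀⁻¹} : Finset G) * F n)).card : ℝ) ≤ ((A ∩ F n).card : ℝ) := by
        rw [Finset.inter_comm]
        exact Nat.cast_le.mpr (Finset.card_le_card (Finset.inter_subset_inter hginA le_rfl))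
      nlinarith [hL]
    rw [hsplit]; nlinarith
  · -- part 2
    intro i hi hin f hf
    set B := (Finset.range n).biUnion fun j => F n * (F j)⁻¹ with hB
    have hkey : (F n \ (F n * {f})).card = ((F n * {f⁻¹}) \ F n).card :=
      card_sdiff_right' (F n) f
    have hsub : (F n * {f⁻¹}) \ F n ⊆ B \ F n := by
      apply Finset.sdiff_subset_sdiff _ le_rfl
      refine le_trans ?_ (Finset.subset_biUnion_of_mem _ (Finset.mem_range.mpr hin))
      exact Finset.mul_subset_mul_left (Finset.singleton_subset_iff.mpr
        (Finset.inv_mem_inv hf))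
    have hsplit : ((B \ F n).card : ℝ) = (B.card : ℝ) - ((B ∩ F n).card : ℝ) := by
      rw [eq_sub_iff_add_eq]
      exact_mod_cast congrArg (Nat.cast (R := ℝ))
        ((Nat.add_comm _ _).trans (Finset.card_inter_add_card_sdiff B (F n)))
    have hBcard : (B.card : ℝ) ≤ (1 + lam) * c := hrt n
    have hginB : F n * ({g₀⁻¹} : Finset G) ⊆ B := by
      refine le_trans ?_ (Finset.subset_biUnion_of_mem _ h0n)
      exact Finset.mul_subset_mul_left (Finset.singleton_subset_iff.mpr
        (Finset.inv_mem_inv hg₀))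
    have hinter : c - (lam' - lam) * c < ((B ∩ F n).card : ℝ) := by
      have h2' : ((F n ∩ (F n * ({g₀⁻¹} : Finset G))).card : ℝ)
          = c - ((F n \ (F n * ({g₀⁻¹} : Finset G))).card : ℝ) := by
        rw [eq_sub_iff_add_eq, hc]
        exact_mod_cast Finset.card_inter_add_card_sdiff (F n) (F n * ({g₀⁻¹} : Finset G))
      have h3' : ((F n \ (F n * ({g₀⁻¹} : Finset G))).card : ℝ)
          ≤ (((F n * {g₀⁻¹}) ∆ F n).card : ℝ) := by
        have hss : F n \ (F n * ({g₀⁻¹} : Finset G)) ⊆ (F n * {g₀⁻¹}) ∆ F n := by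
          rw [symmDiff_def]; exact Finset.subset_union_right
        exact_mod_cast Finset.card_le_card hss
      have h4' : ((F n ∩ (F n * ({g₀⁻¹} : Finset G))).card : ℝ) ≤ ((B ∩ F n).card : ℝ) := by
        rw [Finset.inter_comm]
        exact Nat.cast_le.mpr (Finset.card_le_card (Finset.inter_subset_inter hginB le_rfl))
      nlinarith [hR]
    calc ((F n \ (F n * {f})).card : ℝ) = (((F n * {f⁻¹}) \ F n).card : ℝ) := by rw [hkey]
      _ ≤ ((B \ F n).card : ℝ) := Nat.cast_le.mpr (Finset.card_le_card hsub)
      _ = (B.card : ℝ) - ((B ∩ F n).card : ℝ) := hsplit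
      _ < lam' * c := by nlinarith
end

section
/- Every two-sided Følner sequence in a countable amenable group admits a subsequence that is strongly tempered, i.e., a subsequence such that for every c > 1 some tail of it is c-bi-tempered. -/
open scoped Pointwise symmDiff
open Finset

private lemma key_ev {G : Type*} [Group G] [DecidableEq G]
    (F : ℕ → Finset G) (hne : ∀ n, (F n).Nonempty)
    (hlF : ∀ g : G, Filter.Tendsto
        (fun n => ((({g} * F n) ∆ F n).card : ℝ) / (F n).card) Filter.atTop (nhds 0))
    (hrF : ∀ g : G, Filter.Tendsto
        (fun n => (((F n * {g}) ∆ F n).card : ℝ) / (F n).card) Filter.atTop (nhds 0))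
    (K : Finset G) (ε : ℝ) (hε : 0 < ε) :
    ∀ᶠ n in Filter.atTop, ((K * F n).card : ℝ) ≤ (1 + ε) * (F n).card ∧
      ((F n * K).card : ℝ) ≤ (1 + ε) * (F n).card := by
  have hpos : ∀ n, (0:ℝ) < (F n).card := fun n => by exact_mod_cast (hne n).card_pos
  set δ : ℝ := ε / (K.card + 1) with hδdef
  have hδ : 0 < δ := by positivity
  have h4 : (K.card : ℝ) * δ ≤ ε := by
    have hK1 : (0:ℝ) < (K.card : ℝ) + 1 := by positivity
    have he : ((K.card : ℝ) + 1) * δ = ε := by rw [hδdef]; field_simp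
    nlinarith
  have h1 : ∀ᶠ n in Filter.atTop, ∀ g ∈ K,
      ((({g} * F n) ∆ F n).card : ℝ) / (F n).card < δ ∧
      (((F n * { g }) ∆ F n).card : ℝ) / (F n).card < δ := by
    rw [Filter.eventually_all_finset]
    intro g _
    exact ((hlF g).eventually_lt_const hδ).and ((hrF g).eventually_lt_const hδ)
  filter_upwards [h1] with n hn
  constructor
  · have hsub : K * F n ⊆ F n ∪ K.biUnion (fun g => ({g} * F n) ∆ F n) := by
      intro x hx
      rw [Finset.mem_mul] at hx
      obtain ⟨g, hg, f, hf, rfl⟩ := hx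
      by_cases h : g * f ∈ F n
      · exact Finset.mem_union_left _ h
      · refine Finset.mem_union_right _ (Finset.mem_biUnion.2 ⟨g, hg, ?_⟩)
        rw [Finset.mem_symmDiff]
        exact Or.inl ⟨Finset.mul_mem_mul (Finset.mem_singleton_self g) hf, h⟩
    have h2 : ((K * F n).card : ℝ) ≤ (F n).card + ∑ g ∈ K, ((({g} * F n) ∆ F n).card : ℝ) := by
      calc ((K * F n).card : ℝ) ≤ ((F n ∪ K.biUnion (fun g => ({g} * F n) ∆ F n)).card : ℝ) := by
            exact_mod_cast Finset.card_le_card hsub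
        _ ≤ (F n).card + ((K.biUnion (fun g => ({g} * F n) ∆ F n)).card : ℝ) := by
            exact_mod_cast Finset.card_union_le _ _
        _ ≤ (F n).card + ∑ g ∈ K, ((({g} * F n) ∆ F n).card : ℝ) := by
            have h5 : ((K.biUnion fun g => ({g} * F n) ∆ F n).card : ℝ)
                ≤ ∑ g ∈ K, ((({g} * F n) ∆ F n).card : ℝ) := by
              exact_mod_cast Finset.card_biUnion_le (s := K) (t := fun g => ({g} * F n) ∆ F n)
            linarith
    have h3 : ∑ g ∈ K, ((({g} * F n) ∆ F n).card : ℝ) ≤ K.card * (δ * (F n).card) := by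
      calc ∑ g ∈ K, ((({g} * F n) ∆ F n).card : ℝ) ≤ ∑ _g ∈ K, δ * (F n).card := by
            refine Finset.sum_le_sum fun g hg => ?_
            have := (hn g hg).1
            rw [div_lt_iff₀ (hpos n)] at this
            linarith
        _ = K.card * (δ * (F n).card) := by rw [Finset.sum_const, nsmul_eq_mul]
    nlinarith [hpos n, h2, h3, h4]
  · have hsub : F n * K ⊆ F n ∪ K.biUnion (fun g => (F n * {g}) ∆ F n) := by
      intro x hx
      rw [Finset.mem_mul] at hx
      obtain ⟨f, hf, g, hg, rfl⟩ := hx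
      by_cases h : f * g ∈ F n
      · exact Finset.mem_union_left _ h
      · refine Finset.mem_union_right _ (Finset.mem_biUnion.2 ⟨g, hg, ?_⟩)
        rw [Finset.mem_symmDiff]
        exact Or.inl ⟨Finset.mul_mem_mul hf (Finset.mem_singleton_self g), h⟩
    have h2 : ((F n * K).card : ℝ) ≤ (F n).card + ∑ g ∈ K, (((F n * {g}) ∆ F n).card : ℝ) := by
      calc ((F n * K).card : ℝ) ≤ ((F n ∪ K.biUnion (fun g => (F n * {g}) ∆ F n)).card : ℝ) := by
            exact_mod_cast Finset.card_le_card hsub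
        _ ≤ (F n).card + ((K.biUnion (fun g => (F n * {g}) ∆ F n)).card : ℝ) := by
            exact_mod_cast Finset.card_union_le _ _
        _ ≤ (F n).card + ∑ g ∈ K, (((F n * {g}) ∆ F n).card : ℝ) := by
            have h5 : ((K.biUnion fun g => (F n * {g}) ∆ F n).card : ℝ)
                ≤ ∑ g ∈ K, (((F n * {g}) ∆ F n).card : ℝ) := by
              exact_mod_cast Finset.card_biUnion_le (s := K) (t := fun g => (F n * {g}) ∆ F n)
            linarith
    have h3 : ∑ g ∈ K, (((F n * {g}) ∆ F n).card : ℝ) ≤ K.card * (δ * (F n).card) := by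
      calc ∑ g ∈ K, (((F n * {g}) ∆ F n).card : ℝ) ≤ ∑ _g ∈ K, δ * (F n).card := by
            refine Finset.sum_le_sum fun g hg => ?_
            have := (hn g hg).2
            rw [div_lt_iff₀ (hpos n)] at this
            linarith
        _ = K.card * (δ * (F n).card) := by rw [Finset.sum_const, nsmul_eq_mul]
    nlinarith [hpos n, h2, h3, h4]

theorem fluctuations_stmt3 {G : Type*} [Group G] [Countable G] [DecidableEq G]
    (F : ℕ → Finset G) (hne : ∀ n, (F n).Nonempty)
    (hlF : ∀ g : G, Filter.Tendsto
        (fun n => ((({g} * F n) ∆ F n).card : ℝ) / (F n).card) Filter.atTop (nhds 0))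
    (hrF : ∀ g : G, Filter.Tendsto
        (fun n => (((F n * {g}) ∆ F n).card : ℝ) / (F n).card) Filter.atTop (nhds 0)) :
    ∃ φ : ℕ → ℕ, StrictMono φ ∧
      ∀ c : ℝ, 1 < c → ∃ n₀ : ℕ, ∀ n, n₀ ≤ n →
        ((((Finset.Ico n₀ n).biUnion fun i => (F (φ i))⁻¹ * F (φ n)).card : ℝ)
            ≤ c * (F (φ n)).card) ∧
        ((((Finset.Ico n₀ n).biUnion fun i => F (φ n) * (F (φ i))⁻¹).card : ℝ)
            ≤ c * (F (φ n)).card) := by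
  have hpos : ∀ n, (0:ℝ) < (F n).card := fun n => by exact_mod_cast (hne n).card_pos
  have step : ∀ (K : Finset G) (m k : ℕ), ∃ n, m < n ∧
      ((K * F n).card : ℝ) ≤ (1 + (1/2:ℝ)^k) * (F n).card ∧
      ((F n * K).card : ℝ) ≤ (1 + (1/2:ℝ)^k) * (F n).card := by
    intro K m k
    obtain ⟨N, hN⟩ := Filter.eventually_atTop.1
      (key_ev F hne hlF hrF K ((1/2:ℝ)^k) (by positivity))
    exact ⟨max N (m+1), lt_of_lt_of_le (Nat.lt_succ_self m) (le_max_right _ _),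
      hN _ (le_max_left _ _)⟩
  choose f hf1 hf2 hf3 using step
  let s : ℕ → ℕ × Finset G := fun k =>
    Nat.rec ((0 : ℕ), (F 0)⁻¹)
      (fun k p => (f p.2 p.1 (k+1), p.2 ∪ (F (f p.2 p.1 (k+1)))⁻¹)) k
  have hs : ∀ k, s (k+1) = (f (s k).2 (s k).1 (k+1),
      (s k).2 ∪ (F (f (s k).2 (s k).1 (k+1)))⁻¹) := fun k => rfl
  refine ⟨fun k => (s k).1, strictMono_nat_of_lt_succ fun k => hf1 _ _ _, ?_⟩
  have hA : ∀ i k, i ≤ k → (s i).2 ⊆ (s k).2 := by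
    intro i k h
    induction h with
    | refl => exact subset_rfl
    | step h ih => exact ih.trans (by rw [hs]; exact Finset.subset_union_left)
  have hFA : ∀ k, (F ((s k).1))⁻¹ ⊆ (s k).2 := by
    intro k
    cases k with
    | zero => exact subset_rfl
    | succ k => rw [hs]; exact Finset.subset_union_right
  intro c hc
  obtain ⟨n₀, hn₀⟩ := exists_pow_lt_of_lt_one (sub_pos.2 hc) (by norm_num : (1/2:ℝ) < 1)
  refine ⟨n₀, fun n hn => ?_⟩
  rcases eq_or_lt_of_le hn with rfl | hlt
  · simp only [Finset.Ico_self, Finset.biUnion_empty, Finset.card_empty, Nat.cast_zero]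
    constructor <;> positivity
  · obtain ⟨k, rfl⟩ : ∃ k, n = k + 1 := ⟨n - 1, by omega⟩
    have hkn : ∀ i ∈ Finset.Ico n₀ (k+1), (F ((s i).1))⁻¹ ⊆ (s k).2 := by
      intro i hi
      exact (hFA i).trans (hA i k (Nat.lt_succ_iff.1 (Finset.mem_Ico.1 hi).2))
    have hpow : (1/2:ℝ)^(k+1) ≤ (1/2:ℝ)^n₀ := by
      apply pow_le_pow_of_le_one (by norm_num) (by norm_num)
      omega
    have hcard := hpos ((s (k+1)).1)
    constructor
    · have hsub : (Finset.Ico n₀ (k+1)).biUnion (fun i => (F ((s i).1))⁻¹ * F ((s (k+1)).1))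
          ⊆ (s k).2 * F ((s (k+1)).1) :=
        Finset.biUnion_subset.2 fun i hi => Finset.mul_subset_mul_right (hkn i hi)
      have h1 : (((Finset.Ico n₀ (k+1)).biUnion fun i => (F ((s i).1))⁻¹ * F ((s (k+1)).1)).card : ℝ)
          ≤ (((s k).2 * F ((s (k+1)).1)).card : ℝ) := by
        exact_mod_cast Finset.card_le_card hsub
      have h2 := hf2 (s k).2 (s k).1 (k+1)
      nlinarith
    · have hsub : (Finset.Ico n₀ (k+1)).biUnion (fun i => F ((s (k+1)).1) * (F ((s i).1))⁻¹)
          ⊆ F ((s (k+1)).1) * (s k).2 :=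
        Finset.biUnion_subset.2 fun i hi => Finset.mul_subset_mul_left (hkn i hi)
      have h1 : (((Finset.Ico n₀ (k+1)).biUnion fun i => F ((s (k+1)).1) * (F ((s i).1))⁻¹).card : ℝ)
          ≤ ((F ((s (k+1)).1) * (s k).2).card : ℝ) := by
        exact_mod_cast Finset.card_le_card hsub
      have h2 := hf3 (s k).2 (s k).1 (k+1)
      nlinarith
end

section
/- With A_n as in the recursive construction (each A_n a union of integer intervals, the first of length at least l² and all but the last of length at least l), each A_n is ([-√l, √l], 2/√l)-invariant: for every integer b with |b| ≤ √l, |(b + A_n) △ A_n| ≤ (2/√l)|A_n|. -/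
open scoped symmDiff
open Finset

lemma interval_shift_card (a b c : ℤ) :
    (((Finset.Icc a b).image fun z => c + z) ∆ Finset.Icc a b).card ≤ 2 * c.natAbs := by
  have himg : (Finset.Icc a b).image (fun z => c + z) = Finset.Icc (c + a) (c + b) := by
    ext x
    simp only [Finset.mem_image, Finset.mem_Icc]
    constructor
    · rintro ⟨y, hy, rfl⟩; omega
    · intro h; exact ⟨x - c, by omega, by ring⟩
  rw [himg]
  have hsub : Finset.Icc (c + a) (c + b) ∆ Finset.Icc a b ⊆
      (Finset.Ico a (a + c) ∪ Finset.Ico (a + c) a) ∪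
      (Finset.Ioc b (b + c) ∪ Finset.Ioc (b + c) b) := by
    intro x hx
    rw [Finset.mem_symmDiff] at hx
    simp only [Finset.mem_union, Finset.mem_Icc, Finset.mem_Ico, Finset.mem_Ioc] at *
    omega
  calc _ ≤ _ := Finset.card_le_card hsub
    _ ≤ ((Finset.Ico a (a + c)).card + (Finset.Ico (a + c) a).card) +
        ((Finset.Ioc b (b + c)).card + (Finset.Ioc (b + c) b).card) :=
      le_trans (Finset.card_union_le _ _)
        (add_le_add (Finset.card_union_le _ _) (Finset.card_union_le _ _))
    _ ≤ 2 * c.natAbs := by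
      simp only [Int.card_Ico, Int.card_Ioc]
      omega

theorem fluctuations_stmt5 (l : ℕ) (hl : 4 ≤ l)
    (A : Finset ℤ) (m : ℕ) (hm : 1 ≤ m) (a b : ℕ → ℤ)
    (hab : ∀ i < m, a i ≤ b i)
    (hdisj : ∀ i < m, ∀ j < m, i ≠ j →
        Disjoint (Finset.Icc (a i) (b i)) (Finset.Icc (a j) (b j)))
    (hA : A = (Finset.range m).biUnion fun i => Finset.Icc (a i) (b i))
    (hfirst : (l : ℤ) ^ 2 ≤ b 0 - a 0 + 1)
    (hrest : ∀ i, i < m - 1 → (l : ℤ) ≤ b i - a i + 1) :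
    ∀ c : ℤ, ((|c| : ℤ) : ℝ) ≤ Real.sqrt l →
      (((A.image fun z => c + z) ∆ A).card : ℝ) ≤ 2 / Real.sqrt l * A.card := by
  intro c hc
  set s := Real.sqrt l with hs
  have hs0 : 0 < s := Real.sqrt_pos.mpr (by positivity)
  have hss : s * s = l := Real.mul_self_sqrt (by positivity)
  -- subset of union of per-interval symmetric differences
  have hsub : (A.image fun z => c + z) ∆ A ⊆
      (Finset.range m).biUnion fun i =>
        ((Finset.Icc (a i) (b i)).image fun z => c + z) ∆ Finset.Icc (a i) (b i) := by
    intro x hx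
    rw [Finset.mem_symmDiff] at hx
    rw [Finset.mem_biUnion]
    rcases hx with ⟨h1, h2⟩ | ⟨h1, h2⟩
    · rw [hA, Finset.biUnion_image, Finset.mem_biUnion] at h1
      obtain ⟨i, hi, hxi⟩ := h1
      refine ⟨i, hi, ?_⟩
      rw [Finset.mem_symmDiff]
      left
      refine ⟨hxi, fun hx' => h2 ?_⟩
      rw [hA, Finset.mem_biUnion]; exact ⟨i, hi, hx'⟩
    · rw [hA, Finset.mem_biUnion] at h1
      obtain ⟨i, hi, hxi⟩ := h1
      refine ⟨i, hi, ?_⟩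
      rw [Finset.mem_symmDiff]
      right
      refine ⟨hxi, fun hx' => h2 ?_⟩
      rw [hA, Finset.biUnion_image, Finset.mem_biUnion]; exact ⟨i, hi, hx'⟩
  have hcard1 : (((A.image fun z => c + z) ∆ A).card : ℕ) ≤ m * (2 * c.natAbs) := by
    calc _ ≤ _ := Finset.card_le_card hsub
      _ ≤ ∑ i ∈ Finset.range m,
            (((Finset.Icc (a i) (b i)).image fun z => c + z) ∆ Finset.Icc (a i) (b i)).card :=
        Finset.card_biUnion_le
      _ ≤ ∑ i ∈ Finset.range m, 2 * c.natAbs :=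
        Finset.sum_le_sum fun i _ => interval_shift_card _ _ _
      _ = m * (2 * c.natAbs) := by simp [Finset.sum_const]
  -- lower bound on |A|
  have hcardA : (m : ℤ) * l ≤ A.card := by
    have hAcard : (A.card : ℤ) = ∑ i ∈ Finset.range m, (b i - a i + 1) := by
      rw [hA, Finset.card_biUnion (fun x hx y hy hxy =>
        hdisj x (Finset.mem_range.mp hx) y (Finset.mem_range.mp hy) hxy)]
      push_cast
      refine Finset.sum_congr rfl fun i hi => ?_
      rw [Int.card_Icc]
      have := hab i (Finset.mem_range.mp hi)
      omega
    rw [hAcard]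
    have hl4 : (4 : ℤ) ≤ l := by exact_mod_cast hl
    rcases eq_or_lt_of_le hm with h1 | h2
    · obtain rfl : m = 1 := h1.symm
      simp only [Finset.sum_range_one]
      push_cast
      nlinarith
    · obtain ⟨k, rfl⟩ : ∃ k, m = k + 2 := ⟨m - 2, by omega⟩
      rw [Finset.sum_range_succ]
      have hlast : (1 : ℤ) ≤ b (k + 1) - a (k + 1) + 1 := by
        have := hab (k + 1) (by omega); omega
      have hfirstpart : (l : ℤ) ^ 2 + k * l ≤ ∑ i ∈ Finset.range (k + 1), (b i - a i + 1) := by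
        rw [Finset.sum_range_succ']
        have hmid : ∀ i ∈ Finset.range k, (l : ℤ) ≤ b (i + 1) - a (i + 1) + 1 := by
          intro i hi
          exact hrest (i + 1) (by simp only [Finset.mem_range] at hi; omega)
        calc (l : ℤ) ^ 2 + k * l
            = (∑ _i ∈ Finset.range k, (l : ℤ)) + l ^ 2 := by
              simp [Finset.sum_const]; ring
          _ ≤ _ := add_le_add (Finset.sum_le_sum hmid) hfirst
      push_cast
      nlinarith [sq_nonneg ((l : ℤ) - 1)]
  -- combine over ℝ
  have hca : |(c : ℝ)| ≤ s := by
    rw [hs]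
    push_cast at hc
    exact hc
  have hcna : (c.natAbs : ℝ) = |(c : ℝ)| := by
    rw [Nat.cast_natAbs, Int.cast_abs]
  have h1 : (((A.image fun z => c + z) ∆ A).card : ℝ) ≤ 2 * m * |(c : ℝ)| := by
    calc (((A.image fun z => c + z) ∆ A).card : ℝ) ≤ ((m * (2 * c.natAbs) : ℕ) : ℝ) := by
          exact_mod_cast hcard1
      _ = 2 * m * |(c : ℝ)| := by push_cast [hcna]; ring
  have hA' : (m : ℝ) * l ≤ A.card := by exact_mod_cast hcardA
  rw [div_mul_eq_mul_div, le_div_iff₀ hs0]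
  have hstep : (((A.image fun z => c + z) ∆ A).card : ℝ) * s ≤ 2 * m * |(c : ℝ)| * s :=
    mul_le_mul_of_nonneg_right h1 hs0.le
  have hm0 : (0 : ℝ) ≤ m := Nat.cast_nonneg m
  nlinarith [abs_nonneg ((c : ℝ)), mul_le_mul_of_nonneg_right
    (mul_le_mul_of_nonneg_left hca (by positivity : (0:ℝ) ≤ 2 * m)) hs0.le]
end

section
/- Let φ_l : ℕ₀ → {0,1} be the indicator of 2lℕ₀ + [0, l-1], and let A be a finite set of the form A = [0, (2/λ)M] ∪ ((2lℕ₀ + [0, l-1]) ∩ [0, ((2+λ)/λ)M]) with M ≥ l² and l ≥ 4. Then for any 0 ≤ i ≤ l/4 and any k ≥ 0, (1/|A|) ∑_{z ∈ A} φ_l(z + 2lk + i) ≥ 1/2 + λ/(4(4+λ)) - 4/l. -/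
open Finset

private lemma Fstep (m j x : ℤ) (hm : 0 < m) (hj0 : 0 ≤ j) (hjm : j ≤ m) :
    (j * ((x + 1) / m) + min ((x + 1) % m) j) - (j * (x / m) + min (x % m) j)
      = if x % m < j then 1 else 0 := by
  have h0 : 0 ≤ x % m := Int.emod_nonneg x hm.ne'
  have h1 : x % m < m := Int.emod_lt_of_pos x hm
  have hx : x + 1 = (x % m + 1) + m * (x / m) := by
    have := Int.emod_add_mul_ediv x m; omega
  rcases eq_or_lt_of_le (by omega : x % m + 1 ≤ m) with h | h
  · -- x % m = m - 1
    have hq : (x + 1) / m = x / m + 1 := by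
      rw [hx, Int.add_mul_ediv_left _ _ hm.ne', h, Int.ediv_self hm.ne']; ring
    have hr : (x + 1) % m = 0 := by
      rw [hx, Int.add_mul_emod_self_left, h, Int.emod_self]
    rw [hq, hr]
    rcases eq_or_lt_of_le hjm with hj | hj
    · subst hj
      rw [min_eq_left hj0, min_eq_left (by omega), if_pos (by omega)]
      ring_nf
      omega
    · rw [min_eq_left hj0, min_eq_right (by omega), if_neg (by omega)]
      ring
  · have hq : (x + 1) / m = x / m := by
      rw [hx, Int.add_mul_ediv_left _ _ hm.ne',
        Int.ediv_eq_zero_of_lt (by omega) h]; ring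
    have hr : (x + 1) % m = x % m + 1 := by
      rw [hx, Int.add_mul_emod_self_left, Int.emod_eq_of_lt (by omega) h]
    rw [hq, hr]
    have e : ∀ t s : ℤ, (j * (x / m) + t) - (j * (x / m) + s) = t - s := by
      intro t s; ring
    rw [e]
    simp only [min_def]
    split_ifs <;> omega

private lemma count_eq (m j c : ℤ) (hm : 0 < m) (hj0 : 0 ≤ j) (hjm : j ≤ m)
    (a : ℤ) : ∀ b, a ≤ b →
    (((Finset.Ico a b).filter (fun z => (z + c) % m < j)).card : ℤ)
      = (j * ((b + c) / m) + min ((b + c) % m) j)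
        - (j * ((a + c) / m) + min ((a + c) % m) j) := by
  refine Int.le_induction ?_ ?_
  · simp
  · intro b hb ih
    have hins : Finset.Ico a (b + 1) = insert b (Finset.Ico a b) := by
      ext z; simp only [Finset.mem_Ico, Finset.mem_insert]; omega
    rw [hins, Finset.filter_insert]
    have hstep := Fstep m j (b + c) hm hj0 hjm
    have hbc : b + 1 + c = b + c + 1 := by ring
    split_ifs with hp
    · rw [Finset.card_insert_of_notMem (by simp [Finset.mem_Ico])]
      push_cast
      rw [ih, hbc]
      rw [if_pos hp] at hstep
      linarith
    · rw [ih, hbc]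
      rw [if_neg hp] at hstep
      linarith

private lemma Fbound (m j x : ℤ) (hm : 0 < m) (hj0 : 0 ≤ j) (hjm : j ≤ m) :
    j * x ≤ m * (j * (x / m) + min (x % m) j) ∧
      m * (j * (x / m) + min (x % m) j) ≤ j * x + j * (m - j) := by
  have h0 : 0 ≤ x % m := Int.emod_nonneg x hm.ne'
  have h1 : x % m < m := Int.emod_lt_of_pos x hm
  have hx : m * (x / m) + x % m = x := Int.mul_ediv_add_emod x m
  rcases le_total (x % m) j with h | h
  · rw [min_eq_left h]
    constructor <;> nlinarith [mul_nonneg (sub_nonneg.2 hjm) h0,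
      mul_le_mul_of_nonneg_left h (sub_nonneg.2 hjm)]
  · rw [min_eq_right h]
    constructor <;> nlinarith [mul_nonneg hj0 (by omega : (0:ℤ) ≤ m - x % m),
      mul_le_mul_of_nonneg_left (by omega : x % m ≤ x % m) hj0,
      mul_le_mul_of_nonneg_left (sub_le_sub_left h m) hj0]

private lemma count_bounds (m j c a b : ℤ) (hm : 0 < m) (hj0 : 0 ≤ j) (hjm : j ≤ m)
    (hab : a ≤ b) :
    j * (b - a) - j * (m - j)
        ≤ m * (((Finset.Ico a b).filter (fun z => (z + c) % m < j)).card : ℤ) ∧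
      m * (((Finset.Ico a b).filter (fun z => (z + c) % m < j)).card : ℤ)
        ≤ j * (b - a) + j * (m - j) := by
  rw [count_eq m j c hm hj0 hjm a b hab]
  obtain ⟨hb1, hb2⟩ := Fbound m j (b + c) hm hj0 hjm
  obtain ⟨ha1, ha2⟩ := Fbound m j (a + c) hm hj0 hjm
  constructor <;> nlinarith

set_option maxHeartbeats 2000000 in
theorem fluctuations_stmt6 (lam : ℝ) (hlam : 0 < lam) (l : ℕ) (hl : 4 ≤ l)
    (M : ℤ) (hM : (l : ℤ) ^ 2 ≤ M)
    (A : Finset ℤ)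
    (hA : A = Finset.Icc (0 : ℤ) ⌊2 / lam * (M : ℝ)⌋ ∪
        (Finset.Icc (0 : ℤ) ⌊(2 + lam) / lam * (M : ℝ)⌋).filter
          (fun z => z % (2 * (l : ℤ)) < (l : ℤ)))
    (φ : ℤ → ℝ) (hφ : ∀ z : ℤ, φ z = if z % (2 * (l : ℤ)) < (l : ℤ) then 1 else 0)
    (i k : ℕ) (hi : i ≤ l / 4) :
    1 / 2 + lam / (4 * (4 + lam)) - 4 / (l : ℝ)
      ≤ (1 / (A.card : ℝ)) * ∑ z ∈ A, φ (z + 2 * (l : ℤ) * (k : ℤ) + (i : ℤ)) := by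
  have hl4 : (4:ℤ) ≤ (l:ℤ) := by exact_mod_cast hl
  have hlR : (4:ℝ) ≤ (l:ℝ) := by exact_mod_cast hl
  have hi4 : 4 * (i:ℤ) ≤ (l:ℤ) := by exact_mod_cast (by omega : 4 * i ≤ l)
  have hi0 : (0:ℤ) ≤ (i:ℤ) := Int.natCast_nonneg i
  have hM16 : (16:ℤ) ≤ M := by nlinarith
  have hMR : ((l:ℝ))^2 ≤ (M:ℝ) := by exact_mod_cast hM
  have hMR0 : (0:ℝ) ≤ (M:ℝ) := by
    have : (0:ℤ) ≤ M := by omega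
    exact_mod_cast this
  set m2 : ℤ := 2 * (l:ℤ) with hm2def
  have hm2 : 0 < m2 := by omega
  set c : ℤ := 2 * (l:ℤ) * (k:ℤ) + (i:ℤ) with hcdef
  set N1 : ℤ := ⌊2 / lam * (M:ℝ)⌋ with hN1def
  set N2 : ℤ := ⌊(2 + lam) / lam * (M:ℝ)⌋ with hN2def
  have hN1R : (N1:ℝ) ≤ 2 / lam * M := Int.floor_le _
  have hN1R' : 2 / lam * M < (N1:ℝ) + 1 := Int.lt_floor_add_one _
  have hN2R : (N2:ℝ) ≤ (2+lam)/lam * M := Int.floor_le _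
  have hN2R' : (2+lam)/lam * M < (N2:ℝ) + 1 := Int.lt_floor_add_one _
  have hN10 : 0 ≤ N1 := by
    rw [hN1def]
    apply Int.le_floor.mpr
    push_cast
    positivity
  have hDiff : ((2+lam)/lam * M - 2/lam * M : ℝ) = M := by field_simp; ring
  have hN12 : N1 ≤ N2 := by
    rw [hN1def, hN2def]
    apply Int.floor_le_floor
    nlinarith
  have hDlo : (M:ℝ) - 1 ≤ (N2:ℝ) - N1 := by linarith
  have hDhi : (N2:ℝ) - (N1:ℝ) ≤ (M:ℝ) + 1 := by linarith
  -- predicate facts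
  have hpc : ∀ z : ℤ, (z + c) % m2 = (z % m2 + (i:ℤ)) % m2 := by
    intro z
    have h1 : z + c = (z % m2 + (i:ℤ)) + m2 * (z / m2 + (k:ℤ)) := by
      rw [hcdef, hm2def]
      linear_combination - Int.emod_add_mul_ediv z (2*(l:ℤ))
    rw [h1, Int.add_mul_emod_self_left]
  have hkey : ∀ z : ℤ, (z % m2 < (l:ℤ) ∧ (z + c) % m2 < (l:ℤ)) ↔ z % m2 < (l:ℤ) - i := by
    intro z
    have h0 : 0 ≤ z % m2 := Int.emod_nonneg _ hm2.ne'
    have h1 : z % m2 < m2 := Int.emod_lt_of_pos _ hm2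
    rw [hpc z]
    generalize hr : z % m2 = r at h0 h1 ⊢
    constructor
    · rintro ⟨ha, hb⟩
      by_contra hcon
      push_neg at hcon
      rw [Int.emod_eq_of_lt (by omega) (by omega)] at hb
      omega
    · intro h
      rw [Int.emod_eq_of_lt (by omega) (by omega)]
      omega
  -- set decompositions
  have hA2 : A = Finset.Ico (0:ℤ) (N1+1)
      ∪ (Finset.Ico (N1+1) (N2+1)).filter (fun z => z % m2 < (l:ℤ)) := by
    rw [hA]
    ext z
    simp only [Finset.mem_union, Finset.mem_filter, Finset.mem_Icc, Finset.mem_Ico]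
    by_cases hp : z % m2 < (l:ℤ)
    · simp only [hp, and_true]; omega
    · simp only [hp, and_false, or_false]; omega
  have hdisj : Disjoint (Finset.Ico (0:ℤ) (N1+1))
      ((Finset.Ico (N1+1) (N2+1)).filter (fun z => z % m2 < (l:ℤ))) := by
    rw [Finset.disjoint_left]
    intro z hz hz2
    simp only [Finset.mem_Ico] at hz
    simp only [Finset.mem_filter, Finset.mem_Ico] at hz2
    omega
  have hcard1 : ((Finset.Ico (0:ℤ) (N1+1)).card : ℤ) = N1 + 1 := by
    rw [Int.card_Ico, Int.toNat_of_nonneg (by omega : (0:ℤ) ≤ N1 + 1 - 0)]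
    omega
  have hcardA : (A.card : ℤ) = (N1 + 1)
      + (((Finset.Ico (N1+1) (N2+1)).filter (fun z => z % m2 < (l:ℤ))).card : ℤ) := by
    rw [hA2, Finset.card_union_of_disjoint hdisj]
    push_cast
    omega
  have hfilt : A.filter (fun z => (z + c) % m2 < (l:ℤ))
      = (Finset.Ico (0:ℤ) (N1+1)).filter (fun z => (z + c) % m2 < (l:ℤ))
        ∪ (Finset.Ico (N1+1) (N2+1)).filter (fun z => z % m2 < (l:ℤ) - i) := by
    rw [hA2]
    ext z
    simp only [Finset.mem_union, Finset.mem_filter, Finset.mem_Ico]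
    have hk2 := hkey z
    tauto
  have hdisj2 : Disjoint ((Finset.Ico (0:ℤ) (N1+1)).filter (fun z => (z + c) % m2 < (l:ℤ)))
      ((Finset.Ico (N1+1) (N2+1)).filter (fun z => z % m2 < (l:ℤ) - i)) := by
    rw [Finset.disjoint_left]
    intro z hz hz2
    simp only [Finset.mem_filter, Finset.mem_Ico] at hz hz2
    omega
  have hcardS : ((A.filter (fun z => (z + c) % m2 < (l:ℤ))).card : ℤ)
      = (((Finset.Ico (0:ℤ) (N1+1)).filter (fun z => (z + c) % m2 < (l:ℤ))).card : ℤ)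
        + (((Finset.Ico (N1+1) (N2+1)).filter (fun z => z % m2 < (l:ℤ) - i)).card : ℤ) := by
    rw [hfilt, Finset.card_union_of_disjoint hdisj2]
    push_cast
    omega
  have epred : ∀ (s : Finset ℤ) (j : ℤ),
      s.filter (fun z => (z + 0) % m2 < j) = s.filter (fun z => z % m2 < j) := by
    intro s j
    apply Finset.filter_congr
    intro z _
    simp
  -- counting bounds
  have hS1 := (count_bounds m2 (l:ℤ) c 0 (N1+1) hm2 (by omega) (by omega) (by omega)).1
  have hS2 := (count_bounds m2 ((l:ℤ) - (i:ℤ)) 0 (N1+1) (N2+1) hm2 (by omega) (by omega)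
    (by omega)).1
  have hmub := (count_bounds m2 (l:ℤ) 0 (N1+1) (N2+1) hm2 (by omega) (by omega)
    (by omega)).2
  rw [epred] at hS2 hmub
  -- generalize the three cards to opaque variables
  obtain ⟨S1z, hS1e⟩ : ∃ x : ℤ,
      (((Finset.Ico (0:ℤ) (N1+1)).filter (fun z => (z + c) % m2 < (l:ℤ))).card : ℤ) = x :=
    ⟨_, rfl⟩
  obtain ⟨S2z, hS2e⟩ : ∃ x : ℤ,
      (((Finset.Ico (N1+1) (N2+1)).filter (fun z => z % m2 < (l:ℤ) - i)).card : ℤ) = x :=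
    ⟨_, rfl⟩
  obtain ⟨mz, hmze⟩ : ∃ x : ℤ,
      (((Finset.Ico (N1+1) (N2+1)).filter (fun z => z % m2 < (l:ℤ))).card : ℤ) = x :=
    ⟨_, rfl⟩
  have hS1z0 : 0 ≤ S1z := hS1e ▸ Int.natCast_nonneg _
  have hS2z0 : 0 ≤ S2z := hS2e ▸ Int.natCast_nonneg _
  have hmz0 : 0 ≤ mz := hmze ▸ Int.natCast_nonneg _
  rw [hS1e] at hS1 hcardS
  rw [hS2e] at hS2 hcardS
  rw [hmze] at hmub hcardA
  rw [hm2def] at hS1 hS2 hmub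
  -- integer consequences
  have z1 : (N1 + 1) - (l:ℤ) ≤ 2 * S1z := by
    have h : (l:ℤ) * ((N1 + 1) - (l:ℤ)) ≤ (l:ℤ) * (2 * S1z) := by nlinarith [hS1]
    exact le_of_mul_le_mul_left h (by omega)
  have hD0 : (0:ℤ) ≤ N2 - N1 := by omega
  have z2 : 3 * (N2 - N1) - 4 * (l:ℤ) ≤ 8 * S2z := by
    have t1 : 3 * (l:ℤ) * (N2 - N1) ≤ 4 * ((l:ℤ) - i) * (N2 - N1) := by
      nlinarith [mul_nonneg (show (0:ℤ) ≤ (l:ℤ) - 4 * i by omega) hD0]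
    have t2 : ((l:ℤ) - i) * (2*(l:ℤ) - ((l:ℤ) - i)) ≤ (l:ℤ) * (l:ℤ) := by
      nlinarith [mul_self_nonneg (i:ℤ)]
    have h : (l:ℤ) * (3 * (N2 - N1) - 4 * (l:ℤ)) ≤ (l:ℤ) * (8 * S2z) := by
      nlinarith [hS2]
    exact le_of_mul_le_mul_left h (by omega)
  have z3 : 2 * mz ≤ (N2 - N1) + (l:ℤ) := by
    have h : (l:ℤ) * (2 * mz) ≤ (l:ℤ) * ((N2 - N1) + (l:ℤ)) := by nlinarith [hmub]
    exact le_of_mul_le_mul_left h (by omega)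
  -- combined integer facts
  have intS : 4 * (N1 + 1) + 3 * (N2 - N1) - 8 * (l:ℤ)
      ≤ 8 * ((A.filter (fun z => (z + c) % m2 < (l:ℤ))).card : ℤ) := by
    rw [hcardS]; linarith
  have intC : 2 * (A.card : ℤ) ≤ 2 * (N1 + 1) + (N2 - N1) + (l:ℤ) := by
    rw [hcardA]; linarith
  have intC1 : (1:ℤ) ≤ (A.card : ℤ) := by rw [hcardA]; omega
  -- real versions
  have hS_R : 4 * ((N1:ℝ) + 1) + 3 * ((N2:ℝ) - (N1:ℝ)) - 8 * (l:ℝ)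
      ≤ 8 * ((A.filter (fun z => (z + c) % m2 < (l:ℤ))).card : ℝ) := by exact_mod_cast intS
  have hC_R : 2 * (A.card : ℝ) ≤ 2 * ((N1:ℝ) + 1) + ((N2:ℝ) - (N1:ℝ)) + (l:ℝ) := by
    exact_mod_cast intC
  have hC1 : (1:ℝ) ≤ (A.card : ℝ) := by exact_mod_cast intC1
  have hCR0 : (0:ℝ) < (A.card : ℝ) := by linarith
  -- rewrite the sum
  have harg : ∀ z : ℤ, z + m2 * (k:ℤ) + (i:ℤ) = z + c := by
    intro z; rw [hcdef, hm2def]; ring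
  have hsum : ∑ z ∈ A, φ (z + m2 * (k:ℤ) + (i:ℤ))
      = ((A.filter (fun z => (z + c) % m2 < (l:ℤ))).card : ℝ) := by
    rw [← Finset.sum_boole]
    apply Finset.sum_congr rfl
    intro z _
    rw [hφ, harg z]
  rw [hsum, one_div_mul_eq_div, le_div_iff₀ hCR0]
  -- final numeric reasoning
  set SR : ℝ := ((A.filter (fun z => (z + c) % m2 < (l:ℤ))).card : ℝ) with hSRdef
  set CR : ℝ := ((A.card : ℕ) : ℝ) with hCRdef
  set n1R : ℝ := (N1:ℝ) + 1 with hn1def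
  set DR : ℝ := (N2:ℝ) - (N1:ℝ) with hDRdef
  have hSR0 : (0:ℝ) ≤ SR := Nat.cast_nonneg _
  have hn1Rpos : (1:ℝ) ≤ n1R := by
    have h0 : (0:ℝ) ≤ (N1:ℝ) := by exact_mod_cast hN10
    rw [hn1def]; linarith
  rcases le_or_gt (1 / 2 + lam / (4 * (4 + lam)) - 4 / (l:ℝ)) 0 with hT | hT
  · have := mul_nonpos_of_nonpos_of_nonneg hT (le_of_lt hCR0)
    linarith
  · set U : ℝ := n1R + (DR + (l:ℝ)) / 2 with hUdef
    have hU : CR ≤ U := by rw [hUdef]; linarith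
    have step1 : (1 / 2 + lam / (4 * (4 + lam)) - 4 / (l:ℝ)) * CR
        ≤ (1 / 2 + lam / (4 * (4 + lam)) - 4 / (l:ℝ)) * U :=
      mul_le_mul_of_nonneg_left hU (le_of_lt hT)
    have hUhi : U ≤ 2 / lam * M + (M:ℝ)/2 + 3/2 + (l:ℝ)/2 := by
      rw [hUdef, hn1def, hDRdef]; linarith
    have hUlo : ((M:ℝ) - 1)/2 ≤ U := by
      rw [hUdef, hn1def, hDRdef]; linarith
    have h_t1 : lam / (4 * (4 + lam)) * U ≤ (M:ℝ)/8 + (3 + (l:ℝ))/8 := by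
      have a1 : lam / (4 * (4 + lam)) * U
          ≤ lam / (4 * (4 + lam)) * (2 / lam * M + (M:ℝ)/2 + 3/2 + (l:ℝ)/2) :=
        mul_le_mul_of_nonneg_left hUhi (by positivity)
      have a2 : lam / (4 * (4 + lam)) * (2 / lam * M + (M:ℝ)/2 + 3/2 + (l:ℝ)/2)
          = (M:ℝ)/8 + (3 + (l:ℝ)) * (lam / (8 * (4 + lam))) := by
        field_simp
        ring
      have a3 : (3 + (l:ℝ)) * (lam / (8 * (4 + lam))) ≤ (3 + (l:ℝ)) * (1/8) := by
        apply mul_le_mul_of_nonneg_left _ (by linarith)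
        rw [div_le_iff₀ (by positivity)]
        linarith
      linarith
    have hlpos : (0:ℝ) < (l:ℝ) := by linarith
    have h_t2 : 2 * (l:ℝ) - 1/2 ≤ 4 / (l:ℝ) * U := by
      have b1 : 4 / (l:ℝ) * (((M:ℝ) - 1)/2) ≤ 4 / (l:ℝ) * U :=
        mul_le_mul_of_nonneg_left hUlo (by positivity)
      have b2 : 2 * (l:ℝ) - 1/2 ≤ 4 / (l:ℝ) * (((M:ℝ) - 1)/2) := by
        rw [div_mul_eq_mul_div, le_div_iff₀ hlpos]
        nlinarith
      linarith
    have hTU : (1 / 2 + lam / (4 * (4 + lam)) - 4 / (l:ℝ)) * U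
        = U/2 + lam / (4 * (4 + lam)) * U - 4 / (l:ℝ) * U := by ring
    linarith [hS_R, hDlo]
end

section
/- Let φ_l : ℕ₀ → {0,1} be the indicator of 2lℕ₀ + [0, l-1], and let A be a finite set of the form A = [0, (2/λ)M] ∪ ((2lℕ₀ + [l, 2l-1]) ∩ [0, ((2+λ)/λ)M - 2l + 1]) with M ≥ l² and l ≥ 4. Then for any 0 ≤ i ≤ l/4 and any k ≥ 0, (1/|A|) ∑_{z ∈ A} φ_l(z + 2lk + i) ≤ 1/2 - λ/(4(4+λ)) + 4/l. -/
set_option maxHeartbeats 1000000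

open Finset

lemma one_period (m lo hi u : ℤ) (hm : 0 < m) (hlo : 0 ≤ lo) (hlohi : lo ≤ hi) (hhi : hi < m) :
    (((Finset.Icc u (u + m - 1)).filter (fun z => lo ≤ z % m ∧ z % m ≤ hi)).card : ℤ)
      = hi - lo + 1 := by
  have hcard : ((Finset.Icc u (u + m - 1)).filter (fun z => lo ≤ z % m ∧ z % m ≤ hi)).card
      = (Finset.Icc lo hi).card := by
    apply Finset.card_bij' (fun z _ => z % m) (fun ρ _ => u + (ρ - u) % m)
    · intro z hz
      simp only [mem_filter, mem_Icc] at hz ⊢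
      exact hz.2
    · intro ρ hρ
      simp only [mem_Icc] at hρ
      have hnn : 0 ≤ (ρ - u) % m := Int.emod_nonneg _ (by omega)
      have hlt : (ρ - u) % m < m := Int.emod_lt_of_pos _ hm
      have h : (ρ - u) % m ≡ ρ - u [ZMOD m] := Int.emod_emod_of_dvd _ dvd_rfl
      have e3 : (u + (ρ - u) % m) % m = ρ % m := by simpa using h.add_left u
      have e4 : ρ % m = ρ := Int.emod_eq_of_lt (by omega) (by omega)
      simp only [mem_filter, mem_Icc]
      rw [e3, e4]
      exact ⟨⟨by omega, by omega⟩, hρ.1, hρ.2⟩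
    · intro z hz
      simp only [mem_filter, mem_Icc] at hz
      have hzz : z % m ≡ z [ZMOD m] := Int.emod_emod_of_dvd z dvd_rfl
      have e1 : (z % m - u) % m = (z - u) % m := hzz.sub_right u
      have e2 : (z - u) % m = z - u := Int.emod_eq_of_lt (by omega) (by omega)
      rw [e1, e2]; ring
    · intro ρ hρ
      simp only [mem_Icc] at hρ
      have h : (ρ - u) % m ≡ ρ - u [ZMOD m] := Int.emod_emod_of_dvd _ dvd_rfl
      have e3 : (u + (ρ - u) % m) % m = ρ % m := by simpa using h.add_left u
      have e4 : ρ % m = ρ := Int.emod_eq_of_lt (by omega) (by omega)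
      rw [e3, e4]
  rw [hcard, Int.card_Icc]
  omega

lemma many_periods (m lo hi : ℤ) (hm : 0 < m) (hlo : 0 ≤ lo) (hlohi : lo ≤ hi) (hhi : hi < m)
    (t : ℕ) : ∀ u : ℤ,
    (((Finset.Icc u (u + m * t - 1)).filter (fun z => lo ≤ z % m ∧ z % m ≤ hi)).card : ℤ)
      = t * (hi - lo + 1) := by
  induction t with
  | zero =>
    intro u
    have : Finset.Icc u (u + m * (0:ℕ) - 1) = ∅ := by
      apply Finset.Icc_eq_empty
      push_cast
      omega
    simp [this]
  | succ n ih =>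
    intro u
    have hsplit : Finset.Icc u (u + m * ((n:ℕ)+1:ℕ) - 1)
        = Finset.Icc u (u + m - 1) ∪ Finset.Icc (u + m) (u + m + m * n - 1) := by
      ext z
      simp only [mem_Icc, mem_union]
      push_cast
      constructor
      · intro h
        by_cases hz : z ≤ u + m - 1
        · left; omega
        · right; constructor <;> nlinarith [h.1, h.2]
      · intro h
        rcases h with h | h <;> constructor <;> try omega
        · nlinarith [h.2, hm]
        · nlinarith [h.2]
    have hdisj : Disjoint (Finset.Icc u (u + m - 1)) (Finset.Icc (u + m) (u + m + m * n - 1)) := by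
      rw [Finset.disjoint_left]
      intro z hz1 hz2
      simp only [mem_Icc] at hz1 hz2
      omega
    rw [hsplit, Finset.filter_union, Finset.card_union_of_disjoint (Finset.disjoint_filter_filter hdisj)]
    push_cast
    rw [one_period m lo hi u hm hlo hlohi hhi]
    have := ih (u + m)
    push_cast at this
    rw [this]
    ring

lemma count_le (m lo hi u v : ℤ) (hm : 0 < m) (hlo : 0 ≤ lo) (hlohi : lo ≤ hi) (hhi : hi < m)
    (t : ℕ) (hv : v ≤ u + m * t - 1) :
    (((Finset.Icc u v).filter (fun z => lo ≤ z % m ∧ z % m ≤ hi)).card : ℤ)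
      ≤ t * (hi - lo + 1) := by
  rw [← many_periods m lo hi hm hlo hlohi hhi t u]
  exact_mod_cast Finset.card_le_card (Finset.filter_subset_filter _
    (Finset.Icc_subset_Icc_right hv))

lemma count_ge (m lo hi u v : ℤ) (hm : 0 < m) (hlo : 0 ≤ lo) (hlohi : lo ≤ hi) (hhi : hi < m)
    (t : ℕ) (hv : u + m * t - 1 ≤ v) :
    (t : ℤ) * (hi - lo + 1)
      ≤ (((Finset.Icc u v).filter (fun z => lo ≤ z % m ∧ z % m ≤ hi)).card : ℤ) := by
  rw [← many_periods m lo hi hm hlo hlohi hhi t u]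
  exact_mod_cast Finset.card_le_card (Finset.filter_subset_filter _
    (Finset.Icc_subset_Icc_right hv))

lemma interval_split (m lo hi u v : ℤ) (hm : 0 < m) (hlo : 0 ≤ lo) (hlohi : lo ≤ hi)
    (hhi : hi < m) (hn : u ≤ v + 1) :
    ∃ q : ℕ, ∃ s : ℤ, 0 ≤ s ∧ s < m ∧ v + 1 - u = m * q + s ∧
      (((Finset.Icc u v).filter (fun z => lo ≤ z % m ∧ z % m ≤ hi)).card : ℤ)
        = q * (hi - lo + 1)
          + (((Finset.Icc (u + m * q) v).filter (fun z => lo ≤ z % m ∧ z % m ≤ hi)).card : ℤ) := by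
  set n := v + 1 - u with hn'
  have hq0 : 0 ≤ n / m := Int.ediv_nonneg (by omega) (by omega)
  refine ⟨(n / m).toNat, n % m, Int.emod_nonneg _ (by omega), Int.emod_lt_of_pos _ hm, ?_, ?_⟩
  · rw [Int.toNat_of_nonneg hq0]
    have := Int.mul_ediv_add_emod n m
    omega
  · have hqc : ((((n / m).toNat : ℕ) : ℤ)) = n / m := Int.toNat_of_nonneg hq0
    have hw1 : 0 ≤ m * ((n / m).toNat : ℤ) := by
      rw [hqc]; exact mul_nonneg (by omega) hq0
    have hw2 : m * ((n / m).toNat : ℤ) ≤ n := by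
      rw [hqc]
      have h1 := Int.mul_ediv_add_emod n m
      have h2 := Int.emod_nonneg n (show m ≠ 0 by omega)
      linarith
    have hsplit : Finset.Icc u v
        = Finset.Icc u (u + m * ((n / m).toNat : ℤ) - 1) ∪ Finset.Icc (u + m * ((n / m).toNat : ℤ)) v := by
      obtain ⟨w, hw, hw1', hw2'⟩ : ∃ w : ℤ, w = m * ((n / m).toNat : ℤ) ∧ 0 ≤ w ∧ w ≤ n :=
        ⟨_, rfl, hw1, hw2⟩
      rw [← hw]
      ext z; simp only [mem_Icc, mem_union]; omega
    have hdisj : Disjoint (Finset.Icc u (u + m * ((n / m).toNat : ℤ) - 1))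
        (Finset.Icc (u + m * ((n / m).toNat : ℤ)) v) := by
      rw [Finset.disjoint_left]
      intro z hz1 hz2
      simp only [mem_Icc] at hz1 hz2
      omega
    rw [hsplit, Finset.filter_union,
      Finset.card_union_of_disjoint (Finset.disjoint_filter_filter hdisj)]
    push_cast
    rw [many_periods m lo hi hm hlo hlohi hhi _ u]

lemma count_le_half (m lo hi u v : ℤ) (hm : 0 < m) (hlo : 0 ≤ lo) (hlohi : lo ≤ hi)
    (hhi : hi < m) (hn : u ≤ v + 1) (h2d : 2 * (hi - lo + 1) ≤ m) :
    2 * (((Finset.Icc u v).filter (fun z => lo ≤ z % m ∧ z % m ≤ hi)).card : ℤ)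
      ≤ (v + 1 - u) + (hi - lo + 1) := by
  obtain ⟨q, s, hs0, hsm, hsum, hcard⟩ := interval_split m lo hi u v hm hlo hlohi hhi hn
  set rest := (((Finset.Icc (u + m * q) v).filter (fun z => lo ≤ z % m ∧ z % m ≤ hi)).card : ℤ)
  have hrest1 : rest ≤ s := by
    have := Finset.card_filter_le (Finset.Icc (u + m * q) v) (fun z => lo ≤ z % m ∧ z % m ≤ hi)
    have hc : ((Finset.Icc (u + m * q) v).card : ℤ) ≤ s := by
      rw [Int.card_Icc]
      omega
    have h' : rest ≤ ((Finset.Icc (u + m * q) v).card : ℤ) := by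
      simp only [rest]
      exact_mod_cast this
    omega
  have hrest2 : rest ≤ hi - lo + 1 := by
    have := count_le m lo hi (u + m * q) v hm hlo hlohi hhi 1 (by push_cast; omega)
    simpa using this
  have hqd : 2 * ((q : ℤ) * (hi - lo + 1)) ≤ m * q := by
    have := mul_le_mul_of_nonneg_left h2d (show (0:ℤ) ≤ (q:ℤ) by positivity)
    nlinarith
  rw [hcard]
  nlinarith

lemma count_ge_half (m lo u v : ℤ) (hm : 0 < m) (hlo : 0 < lo) (hlo2 : 2 * lo ≤ m)
    (hn : u ≤ v + 1) :
    (v + 1 - u) - lo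
      ≤ 2 * (((Finset.Icc u v).filter (fun z => lo ≤ z % m ∧ z % m ≤ m - 1)).card : ℤ) := by
  obtain ⟨q, s, hs0, hsm, hsum, hcard⟩ :=
    interval_split m lo (m - 1) u v hm (by omega) (by omega) (by omega) hn
  set rest := (((Finset.Icc (u + m * q) v).filter (fun z => lo ≤ z % m ∧ z % m ≤ m - 1)).card : ℤ)
    with hrestdef
  have hrest0 : 0 ≤ rest := by positivity
  have hrest1 : s - lo ≤ rest := by
    have hpartition := Finset.card_filter_add_card_filter_not
      (s := Finset.Icc (u + m * q) v) (p := fun z => lo ≤ z % m ∧ z % m ≤ m - 1)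
    have hneg : ((Finset.Icc (u + m * q) v).filter
        (fun z => ¬(lo ≤ z % m ∧ z % m ≤ m - 1))).card
        ≤ (((Finset.Icc (u + m * q) v).filter (fun z => 0 ≤ z % m ∧ z % m ≤ lo - 1)).card) := by
      apply Finset.card_le_card
      intro z hz
      simp only [mem_filter, mem_Icc] at hz ⊢
      have h1 : 0 ≤ z % m := Int.emod_nonneg _ (by omega)
      have h2 : z % m < m := Int.emod_lt_of_pos _ hm
      exact ⟨hz.1, by omega, by omega⟩
    have hneg2 : (((Finset.Icc (u + m * q) v).filter
        (fun z => 0 ≤ z % m ∧ z % m ≤ lo - 1)).card : ℤ) ≤ lo := by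
      have := count_le m 0 (lo - 1) (u + m * q) v hm (by omega) (by omega) (by omega) 1
        (by push_cast; omega)
      simpa using this
    have hctot : ((Finset.Icc (u + m * q) v).card : ℤ) = s := by
      rw [Int.card_Icc]; omega
    omega
  have hqd : m * (q : ℤ) ≤ 2 * ((q : ℤ) * (m - 1 - lo + 1)) := by
    have := mul_le_mul_of_nonneg_left hlo2 (show (0:ℤ) ≤ (q:ℤ) by positivity)
    nlinarith
  rw [hcard]
  nlinarith

lemma final_ineq (lam L Mr A1 I x y g : ℝ) (hlam : 0 < lam) (hL : 6 ≤ L)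
    (hM : L ^ 2 ≤ Mr) (hA1 : 1 ≤ A1) (hA1u : lam * A1 ≤ 2 * Mr + lam)
    (hA1d : 2 * Mr ≤ lam * A1)
    (hI0 : 0 ≤ I) (hI : 4 * I ≤ L)
    (hx : 2 * x ≤ A1 + L) (hy : 2 * L * y ≤ I * (Mr - 2 * L + 1) + 2 * L * I)
    (hg : (Mr - 2 * L + 1) - L ≤ 2 * g) (hg0 : 0 ≤ g) :
    x + y ≤ (1 / 2 - lam / (4 * (4 + lam)) + 4 / L) * (A1 + g) := by
  have hL0 : (0:ℝ) < L := by linarith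
  have hlam4 : (0:ℝ) < 4 + lam := by linarith
  have hb0 : 0 < Mr - 2 * L + 1 := by nlinarith
  have hT0 : 0 ≤ 1 / 2 - lam / (4 * (4 + lam)) + 4 / L := by
    have h1 : lam / (4 * (4 + lam)) ≤ 1 / 4 := by
      rw [div_le_iff₀ (by positivity)]
      linarith
    have h2 : 0 ≤ 4 / L := by positivity
    linarith
  have hmid : x + y ≤ (1 / 2 - lam / (4 * (4 + lam)) + 4 / L) * (A1 + (Mr - 3 * L + 1) / 2) := by
    have main : 2 * (4 + lam) * L * (A1 + L) + 2 * (4 + lam) * (I * (Mr - 2 * L + 1) + 2 * L * I)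
        ≤ ((8 + lam) * L + 64 + 16 * lam) * (A1 + (Mr - 3 * L + 1) / 2) := by
      rcases le_total lam L with hcase | hcase
      · -- lam ≤ L : multiply by lam, exact certificate
        rw [← mul_le_mul_iff_right₀ hlam]
        have f1 : (0:ℝ) ≤ (64 + 16 * lam) * (lam * A1 - 2 * Mr) :=
          mul_nonneg (by linarith) (by linarith)
        have f2 : (0:ℝ) ≤ (lam * L) * (2 * Mr + lam - lam * A1) :=
          mul_nonneg (by positivity) (by linarith)
        have f3 : (0:ℝ) ≤ (lam * (4 + lam) * (Mr + 1) / 2) * (L - 4 * I) :=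
          mul_nonneg (div_nonneg (mul_nonneg (mul_nonneg hlam.le hlam4.le) (by linarith))
            (by norm_num)) (by linarith)
        have f4 : (0:ℝ) ≤ 8 * (Mr - L ^ 2) * (4 + lam) ^ 2 :=
          mul_nonneg (by linarith) (by positivity)
        have f5 : (0:ℝ) ≤ lam ^ 2 * L * ((9 / 2) * L - 25) :=
          mul_nonneg (by positivity) (by linarith)
        have f6 : (0:ℝ) ≤ lam * L * (44 * L - 94) :=
          mul_nonneg (by positivity) (by linarith)
        have f7 : (0:ℝ) ≤ 8 * lam ^ 2 := by positivity
        have f8 : (0:ℝ) ≤ 128 * L ^ 2 := by positivity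
        linarith [f1, f2, f3, f4, f5, f6, f7, f8]
      · -- L ≤ lam
        have e1 : (0:ℝ) ≤ 16 * (4 + lam) * (A1 - 1) :=
          mul_nonneg (by linarith) (by linarith)
        have e2 : (0:ℝ) ≤ L * (2 * Mr + lam - lam * A1) :=
          mul_nonneg (by linarith) (by linarith)
        have e3 : (0:ℝ) ≤ ((4 + lam) * (Mr + 1) / 2) * (L - 4 * I) :=
          mul_nonneg (div_nonneg (mul_nonneg hlam4.le (by linarith)) (by norm_num)) (by linarith)
        have e4 : (0:ℝ) ≤ (Mr - L ^ 2) * (32 + 8 * lam) :=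
          mul_nonneg (by linarith) (by linarith)
        have e5 : (0:ℝ) ≤ (lam - L) * L * ((9 / 2) * L - 25) :=
          mul_nonneg (mul_nonneg (by linarith) (by linarith)) (by linarith)
        have e6 : (0:ℝ) ≤ (9 / 2) * ((L - 6) * (L - 6) * (L - 6)) :=
          mul_nonneg (by norm_num) (mul_nonneg (mul_nonneg (by linarith) (by linarith)) (by linarith))
        have e7 : (0:ℝ) ≤ 68 * (L - 6) * (L - 6) :=
          mul_nonneg (mul_nonneg (by norm_num) (by linarith)) (by linarith)
        linarith [e1, e2, e3, e4, e5, e6, e7]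
    have key : 4 * (4 + lam) * L * (x + y)
        ≤ 4 * (4 + lam) * L * ((1 / 2 - lam / (4 * (4 + lam)) + 4 / L) * (A1 + (Mr - 3 * L + 1) / 2)) := by
      have hexp : 4 * (4 + lam) * L * ((1 / 2 - lam / (4 * (4 + lam)) + 4 / L) * (A1 + (Mr - 3 * L + 1) / 2))
          = ((8 + lam) * L + 64 + 16 * lam) * (A1 + (Mr - 3 * L + 1) / 2) := by
        field_simp
        ring
      rw [hexp]
      have hx' := mul_le_mul_of_nonneg_left hx (show (0:ℝ) ≤ 2 * (4 + lam) * L by positivity)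
      have hy' := mul_le_mul_of_nonneg_left hy (show (0:ℝ) ≤ 2 * (4 + lam) by positivity)
      linarith [hx', hy', main]
    have hpos : (0:ℝ) < 4 * (4 + lam) * L := by positivity
    exact le_of_mul_le_mul_left key hpos
  have hfin : (1 / 2 - lam / (4 * (4 + lam)) + 4 / L) * (A1 + (Mr - 3 * L + 1) / 2)
      ≤ (1 / 2 - lam / (4 * (4 + lam)) + 4 / L) * (A1 + g) := by
    apply mul_le_mul_of_nonneg_left _ hT0
    linarith
  linarith

theorem fluctuations_stmt7 (lam : ℝ) (hlam : 0 < lam) (l : ℕ) (hl : 4 ≤ l)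
    (M : ℤ) (hM : (l : ℤ) ^ 2 ≤ M)
    (A : Finset ℤ)
    (hA : A = Finset.Icc (0 : ℤ) ⌊2 / lam * (M : ℝ)⌋ ∪
        (Finset.Icc (0 : ℤ) (⌊(2 + lam) / lam * (M : ℝ)⌋ - 2 * (l : ℤ) + 1)).filter
          (fun z => (l : ℤ) ≤ z % (2 * (l : ℤ))))
    (φ : ℤ → ℝ) (hφ : ∀ z : ℤ, φ z = if z % (2 * (l : ℤ)) < (l : ℤ) then 1 else 0)
    (i k : ℕ) (hi : i ≤ l / 4) :
    (1 / (A.card : ℝ)) * ∑ z ∈ A, φ (z + 2 * (l : ℤ) * (k : ℤ) + (i : ℤ))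
      ≤ 1 / 2 - lam / (4 * (4 + lam)) + 4 / (l : ℝ) := by
  have hM0 : (0:ℤ) < M := by nlinarith [sq_nonneg ((l:ℤ) - 4)]
  have hMr0 : (0:ℝ) < (M:ℝ) := by exact_mod_cast hM0
  have hN10 : (0:ℤ) ≤ ⌊2 / lam * (M : ℝ)⌋ := Int.floor_nonneg.mpr (by positivity)
  have h0A : (0:ℤ) ∈ A := by
    rw [hA]
    apply Finset.mem_union_left
    simp only [Finset.mem_Icc]
    omega
  have hcardA0 : 0 < A.card := Finset.card_pos.mpr ⟨0, h0A⟩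
  have hcA : (0:ℝ) < (A.card : ℝ) := by exact_mod_cast hcardA0
  by_cases hl6 : 6 ≤ l
  case neg =>
    -- trivial bound: average ≤ 1 ≤ RHS since l ≤ 5
    have hl5 : (l:ℝ) ≤ 5 := by exact_mod_cast (by omega : l ≤ 5)
    have hl4 : (4:ℝ) ≤ (l:ℝ) := by exact_mod_cast hl
    have hsum1 : ∑ z ∈ A, φ (z + 2 * (l : ℤ) * (k : ℤ) + (i : ℤ)) ≤ (A.card : ℝ) := by
      calc ∑ z ∈ A, φ (z + 2 * (l : ℤ) * (k : ℤ) + (i : ℤ)) ≤ ∑ z ∈ A, 1 := by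
            apply Finset.sum_le_sum
            intro z _
            rw [hφ]
            split <;> norm_num
        _ = (A.card : ℝ) := by simp
    have h1 : (1 / (A.card : ℝ)) * ∑ z ∈ A, φ (z + 2 * (l : ℤ) * (k : ℤ) + (i : ℤ)) ≤ 1 := by
      rw [one_div, inv_mul_le_iff₀ hcA]
      simpa using hsum1
    have h2 : lam / (4 * (4 + lam)) ≤ 1 / 4 := by
      rw [div_le_iff₀ (by positivity)]
      linarith
    have h3 : (4:ℝ) / 5 ≤ 4 / (l:ℝ) := by
      apply div_le_div_of_nonneg_left (by norm_num) (by linarith) hl5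
    linarith
  case pos =>
  -- MAIN BRANCH (l ≥ 6)
  have hl6' : (6:ℤ) ≤ (l:ℤ) := by exact_mod_cast hl6
  have hm : (0:ℤ) < 2 * (l:ℤ) := by omega
  have h4i : 4 * i ≤ l := by omega
  -- floor identity
  have hNfloor : ⌊(2 + lam) / lam * (M : ℝ)⌋ = ⌊2 / lam * (M : ℝ)⌋ + M := by
    have harg : (2 + lam) / lam * (M : ℝ) = 2 / lam * (M : ℝ) + (M : ℤ) := by
      push_cast
      field_simp
    rw [harg, Int.floor_add_intCast]
  rw [hNfloor] at hA
  -- notation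
  obtain ⟨N1, hN1⟩ : ∃ N1 : ℤ, N1 = ⌊2 / lam * (M : ℝ)⌋ := ⟨_, rfl⟩
  rw [← hN1] at hA hN10
  have hMl : 2 * (l:ℤ) ≤ M := by nlinarith
  -- decompose A
  have hA2 : A = Finset.Icc 0 N1 ∪
      (Finset.Icc (N1 + 1) (N1 + M - 2 * (l:ℤ) + 1)).filter
        (fun z => (l : ℤ) ≤ z % (2 * (l : ℤ))) := by
    rw [hA]
    ext z
    by_cases hp : (l:ℤ) ≤ z % (2 * (l:ℤ)) <;>
      simp only [Finset.mem_union, Finset.mem_filter, Finset.mem_Icc, hp, and_true, and_false,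
        or_false, true_and, false_and] <;> omega
  have hdisj : Disjoint (Finset.Icc (0:ℤ) N1)
      ((Finset.Icc (N1 + 1) (N1 + M - 2 * (l:ℤ) + 1)).filter
        (fun z => (l : ℤ) ≤ z % (2 * (l : ℤ)))) := by
    rw [Finset.disjoint_left]
    intro z hz1 hz2
    simp only [Finset.mem_Icc] at hz1
    simp only [Finset.mem_filter, Finset.mem_Icc] at hz2
    omega
  -- sum as counts
  have hsum_eq : ∀ s : Finset ℤ, ∑ z ∈ s, φ (z + 2 * (l : ℤ) * (k : ℤ) + (i : ℤ))
      = ((s.filter (fun z => (z + 2 * (l : ℤ) * (k : ℤ) + (i : ℤ)) % (2 * (l : ℤ)) < (l:ℤ))).card : ℝ) := by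
    intro s
    rw [Finset.card_filter]
    push_cast
    apply Finset.sum_congr rfl
    intro z _
    rw [hφ]
  -- X bound: count over Icc 0 N1
  have hXbound : 2 * (((Finset.Icc (0:ℤ) N1).filter
      (fun z => (z + 2 * (l : ℤ) * (k : ℤ) + (i : ℤ)) % (2 * (l : ℤ)) < (l:ℤ))).card : ℤ)
      ≤ (N1 + 1) + (l:ℤ) := by
    have hbij : ((Finset.Icc (0:ℤ) N1).filter
        (fun z => (z + 2 * (l : ℤ) * (k : ℤ) + (i : ℤ)) % (2 * (l : ℤ)) < (l:ℤ))).card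
        = ((Finset.Icc (2 * (l : ℤ) * (k : ℤ) + (i : ℤ)) (N1 + (2 * (l : ℤ) * (k : ℤ) + (i : ℤ)))).filter
            (fun w => (0:ℤ) ≤ w % (2 * (l:ℤ)) ∧ w % (2 * (l:ℤ)) ≤ (l:ℤ) - 1)).card := by
      apply Finset.card_bij' (fun z _ => z + (2 * (l : ℤ) * (k : ℤ) + (i : ℤ)))
        (fun w _ => w - (2 * (l : ℤ) * (k : ℤ) + (i : ℤ)))
      · intro z hz
        simp only [Finset.mem_filter, Finset.mem_Icc] at hz ⊢
        have he : z + (2 * (l : ℤ) * (k : ℤ) + (i : ℤ)) = z + 2 * (l : ℤ) * (k : ℤ) + (i : ℤ) := by ring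
        rw [he]
        have hnn : 0 ≤ (z + 2 * (l : ℤ) * (k : ℤ) + (i : ℤ)) % (2 * (l:ℤ)) :=
          Int.emod_nonneg _ (by omega)
        exact ⟨⟨by omega, by omega⟩, hnn, by omega⟩
      · intro w hw
        simp only [Finset.mem_filter, Finset.mem_Icc] at hw ⊢
        have he : w - (2 * (l : ℤ) * (k : ℤ) + (i : ℤ)) + 2 * (l : ℤ) * (k : ℤ) + (i : ℤ) = w := by ring
        rw [he]
        exact ⟨⟨by omega, by omega⟩, by omega⟩
      · intro z _; ring
      · intro w _; ring
    rw [hbij]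
    have := count_le_half (2 * (l:ℤ)) 0 ((l:ℤ) - 1) (2 * (l : ℤ) * (k : ℤ) + (i : ℤ))
      (N1 + (2 * (l : ℤ) * (k : ℤ) + (i : ℤ))) hm (by omega) (by omega) (by omega) (by omega)
      (by omega)
    omega
  -- Y bound: count over G of φ-positive
  have hYsubset : ((Finset.Icc (N1 + 1) (N1 + M - 2 * (l:ℤ) + 1)).filter
        (fun z => (l : ℤ) ≤ z % (2 * (l : ℤ)))).filter
          (fun z => (z + 2 * (l : ℤ) * (k : ℤ) + (i : ℤ)) % (2 * (l : ℤ)) < (l:ℤ))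
      ⊆ (Finset.Icc (N1 + 1) (N1 + M - 2 * (l:ℤ) + 1)).filter
          (fun z => 2 * (l:ℤ) - (i:ℤ) ≤ z % (2 * (l:ℤ)) ∧ z % (2 * (l:ℤ)) ≤ 2 * (l:ℤ) - 1) := by
    intro z hz
    simp only [Finset.mem_filter, Finset.mem_Icc] at hz ⊢
    obtain ⟨⟨⟨hz1, hz2⟩, hzmod⟩, hzP⟩ := hz
    refine ⟨⟨hz1, hz2⟩, ?_, ?_⟩
    · -- 2l - i ≤ z % 2l
      have harg : z + 2 * (l:ℤ) * (k:ℤ) + (i:ℤ) = (z + (i:ℤ)) + 2 * (l:ℤ) * (k:ℤ) := by ring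
      rw [harg, Int.add_mul_emod_self_left] at hzP
      have hmod2 : (z + (i:ℤ)) % (2 * (l:ℤ)) = (z % (2 * (l:ℤ)) + (i:ℤ)) % (2 * (l:ℤ)) := by
        conv_lhs => rw [Int.add_emod]
        conv_rhs => rw [Int.add_emod, Int.emod_emod_of_dvd z dvd_rfl]
      rw [hmod2] at hzP
      have hρlt : z % (2 * (l:ℤ)) < 2 * (l:ℤ) := Int.emod_lt_of_pos _ hm
      by_contra hcon
      push_neg at hcon
      have hsmall : (z % (2 * (l:ℤ)) + (i:ℤ)) % (2 * (l:ℤ)) = z % (2 * (l:ℤ)) + (i:ℤ) :=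
        Int.emod_eq_of_lt (by omega) (by omega)
      omega
    · have := Int.emod_lt_of_pos z hm
      omega
  have hMb0 : (0:ℤ) < M - 2 * (l:ℤ) + 1 := by omega
  obtain ⟨t2, ht2a, ht2b⟩ : ∃ t2 : ℕ, M - 2 * (l:ℤ) + 1 ≤ 2 * (l:ℤ) * t2 ∧
      2 * (l:ℤ) * t2 ≤ M - 2 * (l:ℤ) + 1 + 2 * (l:ℤ) := by
    refine ⟨((M - 2 * (l:ℤ) + 1) / (2 * (l:ℤ))).toNat + 1, ?_, ?_⟩ <;>
    · have h1 := Int.mul_ediv_add_emod (M - 2 * (l:ℤ) + 1) (2 * (l:ℤ))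
      have h2 := Int.emod_nonneg (M - 2 * (l:ℤ) + 1) (show 2 * (l:ℤ) ≠ 0 by omega)
      have h3 := Int.emod_lt_of_pos (M - 2 * (l:ℤ) + 1) hm
      have h4 : 0 ≤ (M - 2 * (l:ℤ) + 1) / (2 * (l:ℤ)) := Int.ediv_nonneg (by omega) (by omega)
      have h5 : (((((M - 2 * (l:ℤ) + 1) / (2 * (l:ℤ))).toNat + 1 : ℕ)) : ℤ)
          = (M - 2 * (l:ℤ) + 1) / (2 * (l:ℤ)) + 1 := by
        push_cast
        omega
      rw [h5]
      nlinarith [h1, h2, h3]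
  have hYbound : 2 * (l:ℤ) * ((((Finset.Icc (N1 + 1) (N1 + M - 2 * (l:ℤ) + 1)).filter
        (fun z => (l : ℤ) ≤ z % (2 * (l : ℤ)))).filter
          (fun z => (z + 2 * (l : ℤ) * (k : ℤ) + (i : ℤ)) % (2 * (l : ℤ)) < (l:ℤ))).card : ℤ)
      ≤ (i:ℤ) * (M - 2 * (l:ℤ) + 1) + 2 * (l:ℤ) * (i:ℤ) := by
    by_cases hi0 : i = 0
    · subst hi0
      have hempty : ((Finset.Icc (N1 + 1) (N1 + M - 2 * (l:ℤ) + 1)).filter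
          (fun z => 2 * (l:ℤ) - ((0:ℕ):ℤ) ≤ z % (2 * (l:ℤ)) ∧ z % (2 * (l:ℤ)) ≤ 2 * (l:ℤ) - 1)) = ∅ := by
        apply Finset.filter_false_of_mem
        intro z _
        have := Int.emod_lt_of_pos z hm
        push_cast
        omega
      have hle := Finset.card_le_card hYsubset
      rw [hempty] at hle
      simp only [Finset.card_empty, Nat.le_zero] at hle
      rw [hle]
      push_cast
      nlinarith
    · have hi1 : 1 ≤ (i:ℤ) := by exact_mod_cast Nat.one_le_iff_ne_zero.mpr hi0
      have hcnt := count_le (2 * (l:ℤ)) (2 * (l:ℤ) - (i:ℤ)) (2 * (l:ℤ) - 1) (N1 + 1)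
        (N1 + M - 2 * (l:ℤ) + 1) hm (by omega) (by omega) (by omega) t2 (by omega)
      have hle : ((((Finset.Icc (N1 + 1) (N1 + M - 2 * (l:ℤ) + 1)).filter
          (fun z => (l : ℤ) ≤ z % (2 * (l : ℤ)))).filter
            (fun z => (z + 2 * (l : ℤ) * (k : ℤ) + (i : ℤ)) % (2 * (l : ℤ)) < (l:ℤ))).card : ℤ)
          ≤ (((Finset.Icc (N1 + 1) (N1 + M - 2 * (l:ℤ) + 1)).filter
            (fun z => 2 * (l:ℤ) - (i:ℤ) ≤ z % (2 * (l:ℤ)) ∧ z % (2 * (l:ℤ)) ≤ 2 * (l:ℤ) - 1)).card : ℤ) := by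
        exact_mod_cast Finset.card_le_card hYsubset
      have hw : (2 * (l:ℤ) - 1 - (2 * (l:ℤ) - (i:ℤ)) + 1) = (i:ℤ) := by ring
      rw [hw] at hcnt
      nlinarith [hle, hcnt, ht2b, hi1]
  -- G card lower bound
  have hGbound : (M - 2 * (l:ℤ) + 1) - (l:ℤ)
      ≤ 2 * (((Finset.Icc (N1 + 1) (N1 + M - 2 * (l:ℤ) + 1)).filter
          (fun z => (l : ℤ) ≤ z % (2 * (l : ℤ)))).card : ℤ) := by
    have hGeq : (Finset.Icc (N1 + 1) (N1 + M - 2 * (l:ℤ) + 1)).filter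
          (fun z => (l : ℤ) ≤ z % (2 * (l : ℤ)))
        = (Finset.Icc (N1 + 1) (N1 + M - 2 * (l:ℤ) + 1)).filter
          (fun z => (l : ℤ) ≤ z % (2 * (l : ℤ)) ∧ z % (2 * (l:ℤ)) ≤ 2 * (l:ℤ) - 1) := by
      apply Finset.filter_congr
      intro z _
      have := Int.emod_lt_of_pos z hm
      constructor
      · intro h; exact ⟨h, by omega⟩
      · intro h; exact h.1
    rw [hGeq]
    have := count_ge_half (2 * (l:ℤ)) (l:ℤ) (N1 + 1) (N1 + M - 2 * (l:ℤ) + 1) hm (by omega)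
      (by omega) (by omega)
    omega
  -- assemble
  have hcardsplit : A.card = (Finset.Icc (0:ℤ) N1).card
      + ((Finset.Icc (N1 + 1) (N1 + M - 2 * (l:ℤ) + 1)).filter
          (fun z => (l : ℤ) ≤ z % (2 * (l : ℤ)))).card := by
    rw [hA2]
    exact Finset.card_union_of_disjoint hdisj
  have hIcc1 : (((Finset.Icc (0:ℤ) N1).card) : ℤ) = N1 + 1 := by
    rw [Int.card_Icc]
    omega
  have hsumsplit : ∑ z ∈ A, φ (z + 2 * (l : ℤ) * (k : ℤ) + (i : ℤ))
      = (((Finset.Icc (0:ℤ) N1).filter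
          (fun z => (z + 2 * (l : ℤ) * (k : ℤ) + (i : ℤ)) % (2 * (l : ℤ)) < (l:ℤ))).card : ℝ)
        + ((((Finset.Icc (N1 + 1) (N1 + M - 2 * (l:ℤ) + 1)).filter
            (fun z => (l : ℤ) ≤ z % (2 * (l : ℤ)))).filter
              (fun z => (z + 2 * (l : ℤ) * (k : ℤ) + (i : ℤ)) % (2 * (l : ℤ)) < (l:ℤ))).card : ℝ) := by
    rw [hA2, Finset.sum_union hdisj, hsum_eq, hsum_eq]
  -- floor bounds, real
  have hfl1 : ((N1:ℝ)) ≤ 2 / lam * (M:ℝ) := by rw [hN1]; exact Int.floor_le _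
  have hfl2 : 2 / lam * (M:ℝ) < (N1:ℝ) + 1 := by rw [hN1]; exact Int.lt_floor_add_one _
  have hlmul : lam * (2 / lam * (M:ℝ)) = 2 * (M:ℝ) := by field_simp
  have hA1d : 2 * (M:ℝ) ≤ lam * ((N1:ℝ) + 1) := by
    have := mul_lt_mul_of_pos_left hfl2 hlam
    rw [hlmul] at this
    linarith
  have hA1u : lam * ((N1:ℝ) + 1) ≤ 2 * (M:ℝ) + lam := by
    have := mul_le_mul_of_nonneg_left hfl1 hlam.le
    rw [hlmul] at this
    nlinarith
  have hfin := final_ineq lam (l:ℝ) (M:ℝ) ((N1:ℝ) + 1) (i:ℝ)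
    ((((Finset.Icc (0:ℤ) N1).filter
        (fun z => (z + 2 * (l : ℤ) * (k : ℤ) + (i : ℤ)) % (2 * (l : ℤ)) < (l:ℤ))).card : ℝ))
    (((((Finset.Icc (N1 + 1) (N1 + M - 2 * (l:ℤ) + 1)).filter
        (fun z => (l : ℤ) ≤ z % (2 * (l : ℤ)))).filter
          (fun z => (z + 2 * (l : ℤ) * (k : ℤ) + (i : ℤ)) % (2 * (l : ℤ)) < (l:ℤ))).card : ℝ))
    ((((Finset.Icc (N1 + 1) (N1 + M - 2 * (l:ℤ) + 1)).filter
        (fun z => (l : ℤ) ≤ z % (2 * (l : ℤ)))).card : ℝ))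
    hlam (by exact_mod_cast hl6) (by exact_mod_cast hM)
    (by nlinarith [show (0:ℝ) ≤ (N1:ℝ) from by exact_mod_cast hN10])
    hA1u hA1d (by positivity) (by exact_mod_cast h4i)
    (by exact_mod_cast hXbound) (by exact_mod_cast hYbound) (by exact_mod_cast hGbound)
    (by positivity)
  have hceq : (A.card : ℝ) = ((N1:ℝ) + 1)
      + (((Finset.Icc (N1 + 1) (N1 + M - 2 * (l:ℤ) + 1)).filter
          (fun z => (l : ℤ) ≤ z % (2 * (l : ℤ)))).card : ℝ) := by
    rw [hcardsplit]
    push_cast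
    have : (((Finset.Icc (0:ℤ) N1).card) : ℝ) = (N1:ℝ) + 1 := by exact_mod_cast hIcc1
    linarith [this]
  rw [one_div, inv_mul_le_iff₀ hcA, hsumsplit, hceq]
  nlinarith [hfin]
end

section
/- For λ > 0 there exists l₀ ∈ ℕ such that for all l ≥ l₀ the following holds with α = 1/2 - λ/(5(4+λ)) and β = 1/2 + λ/(5(4+λ)): for the recursively defined sequence (A_n)_{n=1}^{2N} and any 0 ≤ i ≤ l/4, k ≥ 0, the averages a_n = (1/|A_n|) ∑_{z ∈ A_n} φ_l(z + 2lk + i) satisfy a_n ≥ β for odd n and a_n ≤ α for even n; in particular the sequence (a_n)_{n=1}^{2N} fluctuates across the gap (α, β) at least N times. -/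
open Finset

-- fiber count: number of z in [0,m) with z % L = v
lemma fiber_bounds (L v m : ℤ) (hL : 0 < L) (hv0 : 0 ≤ v) (hvL : v < L) (hm : 0 ≤ m) :
    m - L ≤ L * (((Finset.Ico (0:ℤ) m).filter (fun z => z % L = v)).card : ℤ) ∧
    L * (((Finset.Ico (0:ℤ) m).filter (fun z => z % L = v)).card : ℤ) ≤ m + L := by
  set t : ℤ := (m - v - 1) / L + 1 with ht
  have himg : (Finset.Ico (0:ℤ) m).filter (fun z => z % L = v)
      = (Finset.Ico (0:ℤ) t).image (fun j => v + L * j) := by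
    ext z
    simp only [Finset.mem_filter, Finset.mem_image, Finset.mem_Ico]
    constructor
    · rintro ⟨⟨hz0, hzm⟩, hzv⟩
      refine ⟨z / L, ⟨Int.ediv_nonneg hz0 hL.le, ?_⟩, ?_⟩
      · have hz' : v + L * (z / L) = z := by rw [← hzv]; exact Int.emod_add_mul_ediv z L
        have h1 : z / L ≤ (m - v - 1) / L := by
          rw [Int.le_ediv_iff_mul_le hL]
          have := mul_comm (z / L) L
          linarith
        omega
      · have := Int.emod_add_mul_ediv z L
        omega
    · rintro ⟨j, ⟨hj0, hjt⟩, rfl⟩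
      have hjle : j ≤ (m - v - 1) / L := by omega
      have : j * L ≤ m - v - 1 := by
        rw [← Int.le_ediv_iff_mul_le hL]; exact hjle
      refine ⟨⟨by positivity, by nlinarith⟩, ?_⟩
      rw [Int.add_mul_emod_self_left, Int.emod_eq_of_lt hv0 hvL]
  have hinj : Function.Injective (fun j : ℤ => v + L * j) := by
    intro a b hab
    simp only at hab
    have := mul_left_cancel₀ (ne_of_gt hL) (by linarith : L * a = L * b)
    exact this
  have hcard : (((Finset.Ico (0:ℤ) m).filter (fun z => z % L = v)).card : ℤ) = t := by
    rw [himg, Finset.card_image_of_injective _ hinj, Int.card_Ico]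
    have ht0 : 0 ≤ t := by
      have : -1 ≤ (m - v - 1) / L := by
        rw [Int.le_ediv_iff_mul_le hL]; omega
      omega
    omega
  rw [hcard]
  have h1 := Int.mul_ediv_add_emod (m - v - 1) L
  have h2 := Int.emod_nonneg (m - v - 1) (ne_of_gt hL)
  have h3 := Int.emod_lt_of_pos (m - v - 1) hL
  have : L * t = L * ((m - v - 1) / L) + L := by ring
  constructor <;> nlinarith

lemma count_bounds_s8 (L m : ℤ) (hL : 0 < L) (hm : 0 ≤ m) (Q : ℤ → Prop) [DecidablePred Q] :
    (((Finset.Ico (0:ℤ) L).filter Q).card : ℤ) * (m - L)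
      ≤ L * (((Finset.Ico (0:ℤ) m).filter (fun z => Q (z % L))).card : ℤ) ∧
    L * (((Finset.Ico (0:ℤ) m).filter (fun z => Q (z % L))).card : ℤ)
      ≤ (((Finset.Ico (0:ℤ) L).filter Q).card : ℤ) * (m + L) := by
  set t := (Finset.Ico (0:ℤ) L).filter Q with htdef
  have hfib : ((Finset.Ico (0:ℤ) m).filter (fun z => Q (z % L))).card
      = ∑ v ∈ t, (((Finset.Ico (0:ℤ) m).filter (fun z => z % L = v)).card) := by
    rw [Finset.card_eq_sum_card_fiberwise (f := fun z => z % L) (t := t)]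
    · apply Finset.sum_congr rfl
      intro v hv
      rw [Finset.filter_filter]
      refine congrArg Finset.card (Finset.filter_congr ?_)
      intro z _
      simp only [htdef, Finset.mem_filter, Finset.mem_Ico] at hv
      constructor
      · rintro ⟨_, h⟩; exact h
      · intro h; exact ⟨by rw [h]; exact hv.2, h⟩
    · intro z hz
      simp only [Finset.mem_coe, Finset.mem_filter, Finset.mem_Ico] at hz
      exact Finset.mem_filter.mpr ⟨Finset.mem_Ico.mpr
        ⟨Int.emod_nonneg z (ne_of_gt hL), Int.emod_lt_of_pos z hL⟩, hz.2⟩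
  have hLmul : L * (((Finset.Ico (0:ℤ) m).filter (fun z => Q (z % L))).card : ℤ)
      = ∑ v ∈ t, L * (((Finset.Ico (0:ℤ) m).filter (fun z => z % L = v)).card : ℤ) := by
    rw [hfib]; push_cast; rw [Finset.mul_sum]
  rw [hLmul]
  constructor
  · calc (t.card : ℤ) * (m - L) = ∑ _v ∈ t, (m - L) := by
          rw [Finset.sum_const, nsmul_eq_mul]
      _ ≤ _ := by
          apply Finset.sum_le_sum
          intro v hv
          simp only [htdef, Finset.mem_filter, Finset.mem_Ico] at hv
          exact (fiber_bounds L v m hL hv.1.1 hv.1.2 hm).1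
  · calc _ ≤ ∑ _v ∈ t, (m + L) := by
          apply Finset.sum_le_sum
          intro v hv
          simp only [htdef, Finset.mem_filter, Finset.mem_Ico] at hv
          exact (fiber_bounds L v m hL hv.1.1 hv.1.2 hm).2
      _ = (t.card : ℤ) * (m + L) := by rw [Finset.sum_const, nsmul_eq_mul]

lemma emod_char {l v i : ℤ} (hl : 1 ≤ l) (hv0 : 0 ≤ v) (hv2 : v < 2*l) (hi0 : 0 ≤ i)
    (hil : i < l) : ((v + i) % (2*l) < l ↔ (v < l - i ∨ 2*l - i ≤ v)) := by
  rcases lt_or_ge (v + i) (2*l) with h | h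
  · rw [Int.emod_eq_of_lt (by omega) h]
    omega
  · have : (v + i) % (2*l) = v + i - 2*l := by
      rw [← Int.sub_emod_right, Int.emod_eq_of_lt (by omega) (by omega)]
    rw [this]
    omega

lemma rescard_lt (l : ℤ) (hl : 1 ≤ l) :
    (((Finset.Ico (0:ℤ) (2*l)).filter (fun v => v < l)).card : ℤ) = l := by
  have : (Finset.Ico (0:ℤ) (2*l)).filter (fun v => v < l) = Finset.Ico 0 l := by
    ext v; simp only [Finset.mem_filter, Finset.mem_Ico]; omega
  rw [this, Int.card_Ico]; omega

lemma rescard_ge (l : ℤ) (hl : 1 ≤ l) :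
    (((Finset.Ico (0:ℤ) (2*l)).filter (fun v => l ≤ v)).card : ℤ) = l := by
  have : (Finset.Ico (0:ℤ) (2*l)).filter (fun v => l ≤ v) = Finset.Ico l (2*l) := by
    ext v; simp only [Finset.mem_filter, Finset.mem_Ico]; omega
  rw [this, Int.card_Ico]; omega

lemma rescard_shift (l i : ℤ) (hl : 1 ≤ l) (hi0 : 0 ≤ i) (hil : i < l) :
    (((Finset.Ico (0:ℤ) (2*l)).filter (fun v => (v + i) % (2*l) < l)).card : ℤ) = l := by
  have : (Finset.Ico (0:ℤ) (2*l)).filter (fun v => (v + i) % (2*l) < l)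
      = Finset.Ico 0 (l - i) ∪ Finset.Ico (2*l - i) (2*l) := by
    ext v
    simp only [Finset.mem_filter, Finset.mem_Ico, Finset.mem_union]
    constructor
    · rintro ⟨⟨h1, h2⟩, h3⟩
      have := (emod_char hl h1 h2 hi0 hil).mp h3
      omega
    · rintro (⟨h1, h2⟩ | ⟨h1, h2⟩) <;>
        [refine ⟨⟨h1, by omega⟩, ?_⟩; refine ⟨⟨by omega, h2⟩, ?_⟩] <;>
        [exact (emod_char hl h1 (by omega) hi0 hil).mpr (Or.inl h2);
         exact (emod_char hl (by omega) h2 hi0 hil).mpr (Or.inr h1)]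
  rw [this, Finset.card_union_of_disjoint, Int.card_Ico, Int.card_Ico]
  · omega
  · rw [Finset.disjoint_left]
    intro v hv hv'
    simp only [Finset.mem_Ico] at hv hv'
    omega

lemma rescard_lt_shift (l i : ℤ) (hl : 1 ≤ l) (hi0 : 0 ≤ i) (hil : i < l) :
    (((Finset.Ico (0:ℤ) (2*l)).filter (fun v => v < l ∧ (v + i) % (2*l) < l)).card : ℤ)
      = l - i := by
  have : (Finset.Ico (0:ℤ) (2*l)).filter (fun v => v < l ∧ (v + i) % (2*l) < l)
      = Finset.Ico 0 (l - i) := by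
    ext v
    simp only [Finset.mem_filter, Finset.mem_Ico]
    constructor
    · rintro ⟨⟨h1, h2⟩, h3, h4⟩
      have := (emod_char hl h1 h2 hi0 hil).mp h4
      omega
    · rintro ⟨h1, h2⟩
      exact ⟨⟨h1, by omega⟩, by omega, (emod_char hl h1 (by omega) hi0 hil).mpr (Or.inl h2)⟩
  rw [this, Int.card_Ico]; omega

lemma rescard_ge_shift (l i : ℤ) (hl : 1 ≤ l) (hi0 : 0 ≤ i) (hil : i < l) :
    (((Finset.Ico (0:ℤ) (2*l)).filter (fun v => l ≤ v ∧ (v + i) % (2*l) < l)).card : ℤ)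
      = i := by
  have : (Finset.Ico (0:ℤ) (2*l)).filter (fun v => l ≤ v ∧ (v + i) % (2*l) < l)
      = Finset.Ico (2*l - i) (2*l) := by
    ext v
    simp only [Finset.mem_filter, Finset.mem_Ico]
    constructor
    · rintro ⟨⟨h1, h2⟩, h3, h4⟩
      have := (emod_char hl h1 h2 hi0 hil).mp h4
      omega
    · rintro ⟨h1, h2⟩
      exact ⟨⟨by omega, h2⟩, by omega, (emod_char hl (by omega) h2 hi0 hil).mpr (Or.inr h1)⟩
  rw [this, Int.card_Ico]; omega

lemma Icc_zero_eq_Ico (b : ℤ) : Finset.Icc (0:ℤ) b = Finset.Ico 0 (b+1) := by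
  ext z; simp only [Finset.mem_Icc, Finset.mem_Ico]; omega

lemma interval_count (l b : ℤ) (hl : 1 ≤ l) (hb : 0 ≤ b) (Q : ℤ → Prop) [DecidablePred Q]
    (q : ℤ) (hq : (((Finset.Ico (0:ℤ) (2*l)).filter Q).card : ℤ) = q) :
    q * (b + 1 - 2*l) ≤ 2*l * (((Finset.Icc (0:ℤ) b).filter (fun z => Q (z % (2*l)))).card : ℤ)
    ∧ 2*l * (((Finset.Icc (0:ℤ) b).filter (fun z => Q (z % (2*l)))).card : ℤ)
      ≤ q * (b + 1 + 2*l) := by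
  rw [Icc_zero_eq_Ico, ← hq]
  exact count_bounds_s8 (2*l) (b+1) (by omega) (by omega) Q

lemma sdiff_filter_card (b c : ℤ) (hb : 0 ≤ b) (hbc : b ≤ c)
    (P : ℤ → Prop) [DecidablePred P] :
    (((((Finset.Icc (0:ℤ) c).filter P) \ (Finset.Icc 0 b)).card : ℤ))
      = (((Finset.Icc (0:ℤ) c).filter P).card : ℤ) - (((Finset.Icc (0:ℤ) b).filter P).card : ℤ) := by
  have hsub : (Finset.Icc (0:ℤ) b).filter P ⊆ (Finset.Icc (0:ℤ) c).filter P :=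
    Finset.filter_subset_filter _ (Finset.Icc_subset_Icc le_rfl hbc)
  have heq : ((Finset.Icc (0:ℤ) c).filter P) \ (Finset.Icc 0 b)
      = ((Finset.Icc (0:ℤ) c).filter P) \ ((Finset.Icc (0:ℤ) b).filter P) := by
    ext z
    simp only [Finset.mem_sdiff, Finset.mem_filter, Finset.mem_Icc]
    tauto
  rw [heq, Finset.card_sdiff_of_subset hsub]
  have := Finset.card_le_card hsub
  omega

lemma split_count (l b c : ℤ) (hl : 1 ≤ l) (hb : 0 ≤ b) (hbc : b ≤ c)
    (Q : ℤ → Prop) [DecidablePred Q]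
    (q : ℤ) (hq : (((Finset.Ico (0:ℤ) (2*l)).filter Q).card : ℤ) = q) (hq0 : 0 ≤ q) :
    q * (c - b - 4*l)
      ≤ 2*l * ((((Finset.Icc (0:ℤ) c).filter (fun z => Q (z % (2*l))) \ Finset.Icc 0 b).card : ℤ))
    ∧ 2*l * ((((Finset.Icc (0:ℤ) c).filter (fun z => Q (z % (2*l))) \ Finset.Icc 0 b).card : ℤ))
      ≤ q * (c - b + 4*l) := by
  rw [sdiff_filter_card b c hb hbc]
  have h1 := interval_count l b hl hb Q q hq
  have h2 := interval_count l c hl (le_trans hb hbc) Q q hq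
  constructor <;> nlinarith [h1.1, h1.2, h2.1, h2.2]

set_option maxHeartbeats 4000000 in
theorem fluctuations_stmt8 (lam : ℝ) (hlam : 0 < lam) :
    ∃ l₀ : ℕ, ∀ l : ℕ, l₀ ≤ l →
      ∀ (N : ℕ) (A : ℕ → Finset ℤ) (M : ℕ → ℤ),
        M 0 = (l : ℤ) ^ 2 →
        (∀ n, 1 ≤ n → n ≤ 2 * N → M n ∈ A n ∧ ∀ a ∈ A n, a ≤ M n) →
        (∀ n, n + 1 ≤ 2 * N →
          (Odd (n + 1) → A (n + 1) =
            Finset.Icc (0 : ℤ) ⌊2 / lam * (M n : ℝ)⌋ ∪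
              (Finset.Icc (0 : ℤ) ⌊(2 + lam) / lam * (M n : ℝ)⌋).filter
                (fun z => z % (2 * (l : ℤ)) < (l : ℤ))) ∧
          (Even (n + 1) → A (n + 1) =
            Finset.Icc (0 : ℤ) ⌊2 / lam * (M n : ℝ)⌋ ∪
              (Finset.Icc (0 : ℤ) (⌊(2 + lam) / lam * (M n : ℝ)⌋ - 2 * (l : ℤ) + 1)).filter
                (fun z => (l : ℤ) ≤ z % (2 * (l : ℤ))))) →
        ∀ i ≤ l / 4, ∀ k : ℕ, ∀ n, 1 ≤ n → n ≤ 2 * N →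
          (Odd n → 1 / 2 + lam / (5 * (4 + lam)) ≤
            (1 / ((A n).card : ℝ)) * ∑ z ∈ A n,
              (if (z + 2 * (l : ℤ) * (k : ℤ) + (i : ℤ)) % (2 * (l : ℤ)) < (l : ℤ)
                then (1 : ℝ) else 0)) ∧
          (Even n →
            (1 / ((A n).card : ℝ)) * ∑ z ∈ A n,
              (if (z + 2 * (l : ℤ) * (k : ℤ) + (i : ℤ)) % (2 * (l : ℤ)) < (l : ℤ)
                then (1 : ℝ) else 0) ≤ 1 / 2 - lam / (5 * (4 + lam))) := by
  refine ⟨⌈3 * lam⌉₊ + 200, ?_⟩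
  intro l hl N A M hM0 hmax hrec i hi k n hn1 hn2
  -- Basic numeric facts
  have hl200 : (200 : ℤ) ≤ (l : ℤ) := by exact_mod_cast le_trans (by omega : 200 ≤ ⌈3*lam⌉₊ + 200) hl
  have hlR3 : 3 * lam ≤ (l : ℝ) := by
    calc 3 * lam ≤ (⌈3*lam⌉₊ : ℝ) := Nat.le_ceil _
      _ ≤ (l : ℝ) := by exact_mod_cast le_trans (by omega) hl
  have hi4 : 4 * (i : ℤ) ≤ (l : ℤ) := by
    have : i * 4 ≤ l := (Nat.le_div_iff_mul_le (by norm_num)).mp hi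
    exact_mod_cast by omega
  have hlz1 : (1:ℤ) ≤ (l:ℤ) := by omega
  have hMsq : ∀ m : ℤ, (l:ℤ)^2 ≤ m → 200 * (l:ℤ) ≤ m := by
    intro m hm; nlinarith
  -- floor facts for any m with l² ≤ m
  have hbfacts : ∀ m : ℤ, (l:ℤ)^2 ≤ m →
      6*(l:ℤ) ≤ ⌊2 / lam * (m : ℝ)⌋ ∧ ⌊(2 + lam) / lam * (m : ℝ)⌋ = m + ⌊2 / lam * (m : ℝ)⌋ := by
    intro m hm
    have hmR : ((l:ℝ))^2 ≤ (m:ℝ) := by exact_mod_cast hm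
    have hl0R : (0:ℝ) < (l:ℝ) := by exact_mod_cast lt_of_lt_of_le (by norm_num : (0:ℤ) < 200) hl200
    constructor
    · apply Int.le_floor.mpr
      push_cast
      rw [div_mul_eq_mul_div, le_div_iff₀ hlam]
      nlinarith
    · have : (2 + lam) / lam * (m : ℝ) = (m:ℝ) + 2 / lam * (m:ℝ) := by
        field_simp; ring
      rw [this, Int.floor_intCast_add]
  -- lower bound on M
  have hMlb : ∀ m, m ≤ 2*N → (l:ℤ)^2 ≤ M m := by
    intro m
    induction m with
    | zero => intro _; rw [hM0]
    | succ p ih =>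
      intro hp
      have hMp := ih (by omega)
      obtain ⟨hb6, hc⟩ := hbfacts (M p) hMp
      set b := ⌊2 / lam * (M p : ℝ)⌋ with hbdef
      obtain ⟨hodd, heven⟩ := hrec p (by omega)
      have hub := (hmax (p+1) (by omega) (by omega)).2
      have h200 : 200*(l:ℤ) ≤ M p := hMsq _ hMp
      rcases Nat.even_or_odd (p+1) with he | ho
      · -- even step
        rw [heven he, hc] at hub
        set c' : ℤ := M p + b - 2*(l:ℤ) + 1 with hc'def
        set w : ℤ := 2*(l:ℤ) * ((c' - (l:ℤ)) / (2*(l:ℤ))) + (l:ℤ) with hwdef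
        have hdm := Int.mul_ediv_add_emod (c' - (l:ℤ)) (2*(l:ℤ))
        have hr0 := Int.emod_nonneg (c' - (l:ℤ)) (by omega : (2*(l:ℤ)) ≠ 0)
        have hr1 := Int.emod_lt_of_pos (c' - (l:ℤ)) (by omega : (0:ℤ) < 2*(l:ℤ))
        have hwmod : w % (2*(l:ℤ)) = (l:ℤ) := by
          rw [hwdef, add_comm, Int.add_mul_emod_self_left, Int.emod_eq_of_lt (by omega) (by omega)]
        have hw1 : 0 ≤ w := by linarith
        have hw2 : w ≤ c' := by linarith
        have hwmem : w ∈ Finset.Icc (0:ℤ) b ∪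
            (Finset.Icc (0:ℤ) c').filter
              (fun z => (l:ℤ) ≤ z % (2*(l:ℤ))) := by
          apply Finset.mem_union_right
          rw [Finset.mem_filter, Finset.mem_Icc, hwmod]
          exact ⟨⟨hw1, hw2⟩, le_refl _⟩
        have := hub w hwmem
        linarith
      · -- odd step
        rw [hodd ho, hc] at hub
        set c : ℤ := M p + b with hcdef
        set w : ℤ := 2*(l:ℤ) * (c / (2*(l:ℤ))) with hwdef
        have hdm := Int.mul_ediv_add_emod c (2*(l:ℤ))
        have hr0 := Int.emod_nonneg c (by omega : (2*(l:ℤ)) ≠ 0)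
        have hr1 := Int.emod_lt_of_pos c (by omega : (0:ℤ) < 2*(l:ℤ))
        have hwmod : w % (2*(l:ℤ)) = 0 := Int.mul_emod_right _ _
        have hw1 : 0 ≤ w := by linarith
        have hw2 : w ≤ c := by linarith
        have hwmem : w ∈ Finset.Icc (0:ℤ) b ∪
            (Finset.Icc (0:ℤ) c).filter (fun z => z % (2*(l:ℤ)) < (l:ℤ)) := by
          apply Finset.mem_union_right
          rw [Finset.mem_filter, Finset.mem_Icc, hwmod]
          exact ⟨⟨hw1, hw2⟩, by omega⟩
        have := hub w hwmem
        linarith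

  -- main part
  obtain ⟨p, rfl⟩ : ∃ p, n = p + 1 := ⟨n - 1, by omega⟩
  have hMp : (l:ℤ)^2 ≤ M p := hMlb p (by omega)
  have h200 : 200*(l:ℤ) ≤ M p := hMsq _ hMp
  obtain ⟨hb6, hc⟩ := hbfacts (M p) hMp
  set b := ⌊2 / lam * (M p : ℝ)⌋ with hbdef
  have hbR : (b:ℝ) ≤ 2 / lam * ((M p : ℤ) : ℝ) := Int.floor_le _
  obtain ⟨hodd, heven⟩ := hrec p (by omega)
  have hi0 : (0:ℤ) ≤ (i:ℤ) := Int.natCast_nonneg i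
  have hil : (i:ℤ) < (l:ℤ) := by omega
  have hb0 : (0:ℤ) ≤ b := by omega
  have hpred : ∀ z : ℤ, ((z + 2*(l:ℤ)*(k:ℤ) + (i:ℤ)) % (2*(l:ℤ)) < (l:ℤ)) ↔
      ((z % (2*(l:ℤ)) + (i:ℤ)) % (2*(l:ℤ)) < (l:ℤ)) := by
    intro z
    have h1 : z + 2*(l:ℤ)*(k:ℤ) + (i:ℤ) = (z + (i:ℤ)) + (2*(l:ℤ))*(k:ℤ) := by ring
    rw [h1, Int.add_mul_emod_self_left, ← Int.emod_add_emod]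
  -- real facts
  have hl0R : (0:ℝ) < (l:ℝ) := by exact_mod_cast lt_of_lt_of_le (by norm_num : (0:ℤ) < 200) hl200
  have rl : (200:ℝ) ≤ (l:ℝ) := by exact_mod_cast hl200
  have rm : 200*(l:ℝ) ≤ ((M p : ℤ):ℝ) := by exact_mod_cast h200
  have rb : lam * ((b:ℤ):ℝ) ≤ 2 * ((M p : ℤ):ℝ) := by
    rw [div_mul_eq_mul_div, le_div_iff₀ hlam] at hbR
    linarith
  have rml2 : 200*(lam*(l:ℝ)) ≤ lam*((M p : ℤ):ℝ) := by nlinarith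
  have rbx : 6*(l:ℝ) ≤ ((b:ℤ):ℝ) := by exact_mod_cast hb6
  have ri1 : 4*((i:ℕ):ℝ) ≤ (l:ℝ) := by exact_mod_cast hi4
  have ri0 : (0:ℝ) ≤ ((i:ℕ):ℝ) := Nat.cast_nonneg i
  have h54 : (0:ℝ) < 5*(4+lam) := by linarith
  have h2l : (0:ℝ) < 2*(l:ℝ) := by linarith
  rcases Nat.even_or_odd (p+1) with he | ho
  · -- n even : upper bound
    refine ⟨fun ho' => absurd he (by rcases ho' with ⟨t,ht⟩; rcases he with ⟨u,hu⟩; omega), fun _ => ?_⟩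
    have hA : A (p+1) = Finset.Icc (0:ℤ) b ∪
        (Finset.Icc (0:ℤ) (M p + b - 2*(l:ℤ) + 1)).filter (fun z => (l:ℤ) ≤ z % (2*(l:ℤ))) := by
      rw [heven he, hc]
    have hbc : b ≤ M p + b - 2*(l:ℤ) + 1 := by omega
    have hA2 : A (p+1) = Finset.Icc (0:ℤ) b ∪
        ((Finset.Icc (0:ℤ) (M p + b - 2*(l:ℤ) + 1)).filter (fun z => (l:ℤ) ≤ z % (2*(l:ℤ)))
          \ Finset.Icc (0:ℤ) b) := by
      rw [hA, Finset.union_sdiff_self_eq_union]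
    rw [hA2, Finset.sum_boole, Finset.filter_union,
        Finset.card_union_of_disjoint Finset.disjoint_sdiff,
        Finset.card_union_of_disjoint (Finset.disjoint_filter_filter Finset.disjoint_sdiff)]
    have hSBset : (Finset.Icc (0:ℤ) b).filter
          (fun z => (z + 2*(l:ℤ)*(k:ℤ) + (i:ℤ)) % (2*(l:ℤ)) < (l:ℤ))
        = (Finset.Icc (0:ℤ) b).filter (fun z => (z % (2*(l:ℤ)) + (i:ℤ)) % (2*(l:ℤ)) < (l:ℤ)) := by
      apply Finset.filter_congr
      intro z _
      exact hpred z
    have hSCBset : (((Finset.Icc (0:ℤ) (M p + b - 2*(l:ℤ) + 1)).filter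
            (fun z => (l:ℤ) ≤ z % (2*(l:ℤ))) \ Finset.Icc (0:ℤ) b)).filter
          (fun z => (z + 2*(l:ℤ)*(k:ℤ) + (i:ℤ)) % (2*(l:ℤ)) < (l:ℤ))
        = (Finset.Icc (0:ℤ) (M p + b - 2*(l:ℤ) + 1)).filter
            (fun z => (l:ℤ) ≤ z % (2*(l:ℤ)) ∧ (z % (2*(l:ℤ)) + (i:ℤ)) % (2*(l:ℤ)) < (l:ℤ))
          \ Finset.Icc (0:ℤ) b := by
      ext z
      simp only [Finset.mem_filter, Finset.mem_sdiff, Finset.mem_Icc]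
      have := hpred z
      tauto
    rw [hSBset, hSCBset]
    have hSB : (l:ℤ) * (b + 1 - 2*(l:ℤ)) ≤ 2*(l:ℤ) *
          (((Finset.Icc (0:ℤ) b).filter
            (fun z => (z % (2*(l:ℤ)) + (i:ℤ)) % (2*(l:ℤ)) < (l:ℤ))).card : ℤ)
        ∧ 2*(l:ℤ) * (((Finset.Icc (0:ℤ) b).filter
            (fun z => (z % (2*(l:ℤ)) + (i:ℤ)) % (2*(l:ℤ)) < (l:ℤ))).card : ℤ)
          ≤ (l:ℤ) * (b + 1 + 2*(l:ℤ)) :=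
      interval_count (l:ℤ) b hlz1 hb0 (fun v => (v + (i:ℤ)) % (2*(l:ℤ)) < (l:ℤ)) (l:ℤ) (rescard_shift (l:ℤ) (i:ℤ) hlz1 hi0 hil)
    have hG : (l:ℤ) * ((M p + b - 2*(l:ℤ) + 1) - b - 4*(l:ℤ)) ≤ 2*(l:ℤ) *
          ((((Finset.Icc (0:ℤ) (M p + b - 2*(l:ℤ) + 1)).filter
            (fun z => (l:ℤ) ≤ z % (2*(l:ℤ))) \ Finset.Icc (0:ℤ) b).card : ℤ))
        ∧ 2*(l:ℤ) * ((((Finset.Icc (0:ℤ) (M p + b - 2*(l:ℤ) + 1)).filter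
            (fun z => (l:ℤ) ≤ z % (2*(l:ℤ))) \ Finset.Icc (0:ℤ) b).card : ℤ))
          ≤ (l:ℤ) * ((M p + b - 2*(l:ℤ) + 1) - b + 4*(l:ℤ)) :=
      split_count (l:ℤ) b _ hlz1 hb0 hbc (fun v => (l:ℤ) ≤ v) (l:ℤ) (rescard_ge (l:ℤ) hlz1) (by omega)
    have hSCB : ((i:ℤ)) * ((M p + b - 2*(l:ℤ) + 1) - b - 4*(l:ℤ)) ≤ 2*(l:ℤ) *
          ((((Finset.Icc (0:ℤ) (M p + b - 2*(l:ℤ) + 1)).filter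
            (fun z => (l:ℤ) ≤ z % (2*(l:ℤ)) ∧ (z % (2*(l:ℤ)) + (i:ℤ)) % (2*(l:ℤ)) < (l:ℤ))
            \ Finset.Icc (0:ℤ) b).card : ℤ))
        ∧ 2*(l:ℤ) * ((((Finset.Icc (0:ℤ) (M p + b - 2*(l:ℤ) + 1)).filter
            (fun z => (l:ℤ) ≤ z % (2*(l:ℤ)) ∧ (z % (2*(l:ℤ)) + (i:ℤ)) % (2*(l:ℤ)) < (l:ℤ))
            \ Finset.Icc (0:ℤ) b).card : ℤ))
          ≤ ((i:ℤ)) * ((M p + b - 2*(l:ℤ) + 1) - b + 4*(l:ℤ)) :=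
      split_count (l:ℤ) b _ hlz1 hb0 hbc
        (fun v => (l:ℤ) ≤ v ∧ (v + (i:ℤ)) % (2*(l:ℤ)) < (l:ℤ)) (i:ℤ)
        (rescard_ge_shift (l:ℤ) (i:ℤ) hlz1 hi0 hil) hi0
    obtain ⟨n1, hv1⟩ : ∃ t, ((Finset.Icc (0:ℤ) b).filter
        (fun z => (z % (2*(l:ℤ)) + (i:ℤ)) % (2*(l:ℤ)) < (l:ℤ))).card = t := ⟨_, rfl⟩
    obtain ⟨n2, hv2⟩ : ∃ t, ((Finset.Icc (0:ℤ) (M p + b - 2*(l:ℤ) + 1)).filter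
        (fun z => (l:ℤ) ≤ z % (2*(l:ℤ)) ∧ (z % (2*(l:ℤ)) + (i:ℤ)) % (2*(l:ℤ)) < (l:ℤ))
        \ Finset.Icc (0:ℤ) b).card = t := ⟨_, rfl⟩
    obtain ⟨n3, hv3⟩ : ∃ t, ((Finset.Icc (0:ℤ) (M p + b - 2*(l:ℤ) + 1)).filter
        (fun z => (l:ℤ) ≤ z % (2*(l:ℤ))) \ Finset.Icc (0:ℤ) b).card = t := ⟨_, rfl⟩
    obtain ⟨nB, hvB⟩ : ∃ t, (Finset.Icc (0:ℤ) b).card = t := ⟨_, rfl⟩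
    simp only [hv1, hv2, hv3, hvB] at hSB hSCB hG ⊢
    have hBv : ((nB:ℕ) : ℝ) = ((b:ℤ):ℝ) + 1 := by
      have : ((nB:ℕ) : ℤ) = b + 1 := by rw [← hvB, Int.card_Icc]; omega
      exact_mod_cast this
    obtain ⟨hSB1, hSB2⟩ := hSB
    obtain ⟨hG1, hG2⟩ := hG
    obtain ⟨hSCB1, hSCB2⟩ := hSCB
    clear hv1 hv2 hv3 hvB hSBset hSCBset hA hA2 hmax hrec hMlb hodd heven hbfacts hMsq
    push_cast
    rw [hBv]
    have rn3 : (0:ℝ) ≤ ((n3:ℕ):ℝ) := Nat.cast_nonneg n3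
    have rSB2 : 2*(l:ℝ)*((n1:ℕ):ℝ) ≤ (l:ℝ)*(((b:ℤ):ℝ)+1+2*(l:ℝ)) := by exact_mod_cast hSB2
    have rG1 : (l:ℝ)*((((M p : ℤ):ℝ) + ((b:ℤ):ℝ) - 2*(l:ℝ) + 1) - ((b:ℤ):ℝ) - 4*(l:ℝ))
        ≤ 2*(l:ℝ)*((n3:ℕ):ℝ) := by exact_mod_cast hG1
    have rSCB2 : 2*(l:ℝ)*((n2:ℕ):ℝ)
        ≤ ((i:ℕ):ℝ) * ((((M p : ℤ):ℝ) + ((b:ℤ):ℝ) - 2*(l:ℝ) + 1) - ((b:ℤ):ℝ) + 4*(l:ℝ)) := by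
      exact_mod_cast hSCB2
    have hkey1 : lam * (2*(((b:ℤ):ℝ)+1) + (((M p : ℤ):ℝ) - 2*(l:ℝ) + 1) - 4*(l:ℝ))
        ≤ ((((M p : ℤ):ℝ) - 2*(l:ℝ) + 1)/4 - 5*(l:ℝ)) * (5*(4+lam)) := by
      nlinarith [rb, rml2, rm, hlR3, hlam.le, rl]
    have hA4 : lam/(5*(4+lam)) * (2*(((b:ℤ):ℝ)+1) + (((M p : ℤ):ℝ) - 2*(l:ℝ) + 1) - 4*(l:ℝ))
        + 5*(l:ℝ) ≤ (((M p : ℤ):ℝ) - 2*(l:ℝ) + 1)/4 := by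
      have h2 : lam/(5*(4+lam)) * (2*(((b:ℤ):ℝ)+1) + (((M p : ℤ):ℝ) - 2*(l:ℝ) + 1) - 4*(l:ℝ))
          = lam * (2*(((b:ℤ):ℝ)+1) + (((M p : ℤ):ℝ) - 2*(l:ℝ) + 1) - 4*(l:ℝ)) / (5*(4+lam)) := by
        ring
      have h3 : lam * (2*(((b:ℤ):ℝ)+1) + (((M p : ℤ):ℝ) - 2*(l:ℝ) + 1) - 4*(l:ℝ)) / (5*(4+lam))
          ≤ (((M p : ℤ):ℝ) - 2*(l:ℝ) + 1)/4 - 5*(l:ℝ) := by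
        rw [div_le_iff₀ h54]; linarith
      linarith [h2.le, h2.ge, h3]
    have hkeydiv : ((((b:ℤ):ℝ)+1) + 2*(l:ℝ)) + ((((M p : ℤ):ℝ) - 2*(l:ℝ) + 1) + 4*(l:ℝ))/4
        ≤ (1/2 - lam/(5*(4+lam)))
          * (2*(((b:ℤ):ℝ)+1) + ((((M p : ℤ):ℝ) - 2*(l:ℝ) + 1) - 4*(l:ℝ))) := by
      nlinarith [hA4, sq_nonneg (1:ℝ)]
    have hli : (0:ℝ) ≤ (l:ℝ) - 4*((i:ℕ):ℝ) := by linarith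
    have hD4 : (0:ℝ) ≤ (((M p : ℤ):ℝ) - 2*(l:ℝ) + 1) + 4*(l:ℝ) := by linarith
    have hsu : 2*(l:ℝ)*(((n1:ℕ):ℝ) + ((n2:ℕ):ℝ)) ≤ (l:ℝ)*((((b:ℤ):ℝ)+1) + 2*(l:ℝ))
        + ((l:ℝ)/4) * ((((M p : ℤ):ℝ) - 2*(l:ℝ) + 1) + 4*(l:ℝ)) := by
      nlinarith [rSB2, rSCB2, mul_nonneg hli hD4]
    have htl : 2*(l:ℝ)*(((b:ℤ):ℝ)+1) + (l:ℝ)*((((M p : ℤ):ℝ) - 2*(l:ℝ) + 1) - 4*(l:ℝ))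
        ≤ 2*(l:ℝ)*((((b:ℤ):ℝ)+1) + ((n3:ℕ):ℝ)) := by linarith [rG1]
    have halpha : (0:ℝ) ≤ 1/2 - lam/(5*(4+lam)) := by
      rw [sub_nonneg, div_le_iff₀ h54]; linarith
    have hchain : 2*(l:ℝ)*(((n1:ℕ):ℝ) + ((n2:ℕ):ℝ))
        ≤ (1/2 - lam/(5*(4+lam))) * (2*(l:ℝ)*((((b:ℤ):ℝ)+1) + ((n3:ℕ):ℝ))) := by
      have c3 := mul_le_mul_of_nonneg_left hkeydiv hl0R.le
      have c4 := mul_le_mul_of_nonneg_left htl halpha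
      nlinarith [hsu, c3, c4]
    have hTpos : (0:ℝ) < ((b:ℤ):ℝ) + 1 + ((n3:ℕ):ℝ) := by linarith
    rw [one_div_mul_eq_div, div_le_iff₀ hTpos]
    have hfin := le_of_mul_le_mul_left
      (by linarith [hchain] : 2*(l:ℝ)*(((n1:ℕ):ℝ) + ((n2:ℕ):ℝ))
        ≤ 2*(l:ℝ)*((1/2 - lam/(5*(4+lam))) * (((b:ℤ):ℝ) + 1 + ((n3:ℕ):ℝ)))) h2l
    linarith [hfin]
  · -- n odd : lower bound
    refine ⟨fun _ => ?_, fun he' => absurd he' (by rcases ho with ⟨t,ht⟩; rcases he' with ⟨u,hu⟩; omega)⟩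
    have hA : A (p+1) = Finset.Icc (0:ℤ) b ∪
        (Finset.Icc (0:ℤ) (M p + b)).filter (fun z => z % (2*(l:ℤ)) < (l:ℤ)) := by
      rw [hodd ho, hc]
    have hbc : b ≤ M p + b := by omega
    have hA2 : A (p+1) = Finset.Icc (0:ℤ) b ∪
        ((Finset.Icc (0:ℤ) (M p + b)).filter (fun z => z % (2*(l:ℤ)) < (l:ℤ))
          \ Finset.Icc (0:ℤ) b) := by
      rw [hA, Finset.union_sdiff_self_eq_union]
    rw [hA2, Finset.sum_boole, Finset.filter_union,
        Finset.card_union_of_disjoint Finset.disjoint_sdiff,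
        Finset.card_union_of_disjoint (Finset.disjoint_filter_filter Finset.disjoint_sdiff)]
    have hSBset : (Finset.Icc (0:ℤ) b).filter
          (fun z => (z + 2*(l:ℤ)*(k:ℤ) + (i:ℤ)) % (2*(l:ℤ)) < (l:ℤ))
        = (Finset.Icc (0:ℤ) b).filter (fun z => (z % (2*(l:ℤ)) + (i:ℤ)) % (2*(l:ℤ)) < (l:ℤ)) := by
      apply Finset.filter_congr
      intro z _
      exact hpred z
    have hSCBset : (((Finset.Icc (0:ℤ) (M p + b)).filter
            (fun z => z % (2*(l:ℤ)) < (l:ℤ)) \ Finset.Icc (0:ℤ) b)).filter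
          (fun z => (z + 2*(l:ℤ)*(k:ℤ) + (i:ℤ)) % (2*(l:ℤ)) < (l:ℤ))
        = (Finset.Icc (0:ℤ) (M p + b)).filter
            (fun z => z % (2*(l:ℤ)) < (l:ℤ) ∧ (z % (2*(l:ℤ)) + (i:ℤ)) % (2*(l:ℤ)) < (l:ℤ))
          \ Finset.Icc (0:ℤ) b := by
      ext z
      simp only [Finset.mem_filter, Finset.mem_sdiff, Finset.mem_Icc]
      have := hpred z
      tauto
    rw [hSBset, hSCBset]
    have hSB : (l:ℤ) * (b + 1 - 2*(l:ℤ)) ≤ 2*(l:ℤ) *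
          (((Finset.Icc (0:ℤ) b).filter
            (fun z => (z % (2*(l:ℤ)) + (i:ℤ)) % (2*(l:ℤ)) < (l:ℤ))).card : ℤ)
        ∧ 2*(l:ℤ) * (((Finset.Icc (0:ℤ) b).filter
            (fun z => (z % (2*(l:ℤ)) + (i:ℤ)) % (2*(l:ℤ)) < (l:ℤ))).card : ℤ)
          ≤ (l:ℤ) * (b + 1 + 2*(l:ℤ)) :=
      interval_count (l:ℤ) b hlz1 hb0 (fun v => (v + (i:ℤ)) % (2*(l:ℤ)) < (l:ℤ)) (l:ℤ)
        (rescard_shift (l:ℤ) (i:ℤ) hlz1 hi0 hil)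
    have hG : (l:ℤ) * ((M p + b) - b - 4*(l:ℤ)) ≤ 2*(l:ℤ) *
          ((((Finset.Icc (0:ℤ) (M p + b)).filter
            (fun z => z % (2*(l:ℤ)) < (l:ℤ)) \ Finset.Icc (0:ℤ) b).card : ℤ))
        ∧ 2*(l:ℤ) * ((((Finset.Icc (0:ℤ) (M p + b)).filter
            (fun z => z % (2*(l:ℤ)) < (l:ℤ)) \ Finset.Icc (0:ℤ) b).card : ℤ))
          ≤ (l:ℤ) * ((M p + b) - b + 4*(l:ℤ)) :=
      split_count (l:ℤ) b _ hlz1 hb0 hbc (fun v => v < (l:ℤ)) (l:ℤ)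
        (rescard_lt (l:ℤ) hlz1) (by omega)
    have hSCB : ((l:ℤ) - (i:ℤ)) * ((M p + b) - b - 4*(l:ℤ)) ≤ 2*(l:ℤ) *
          ((((Finset.Icc (0:ℤ) (M p + b)).filter
            (fun z => z % (2*(l:ℤ)) < (l:ℤ) ∧ (z % (2*(l:ℤ)) + (i:ℤ)) % (2*(l:ℤ)) < (l:ℤ))
            \ Finset.Icc (0:ℤ) b).card : ℤ))
        ∧ 2*(l:ℤ) * ((((Finset.Icc (0:ℤ) (M p + b)).filter
            (fun z => z % (2*(l:ℤ)) < (l:ℤ) ∧ (z % (2*(l:ℤ)) + (i:ℤ)) % (2*(l:ℤ)) < (l:ℤ))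
            \ Finset.Icc (0:ℤ) b).card : ℤ))
          ≤ ((l:ℤ) - (i:ℤ)) * ((M p + b) - b + 4*(l:ℤ)) :=
      split_count (l:ℤ) b _ hlz1 hb0 hbc
        (fun v => v < (l:ℤ) ∧ (v + (i:ℤ)) % (2*(l:ℤ)) < (l:ℤ)) ((l:ℤ) - (i:ℤ))
        (rescard_lt_shift (l:ℤ) (i:ℤ) hlz1 hi0 hil) (by omega)
    obtain ⟨n1, hv1⟩ : ∃ t, ((Finset.Icc (0:ℤ) b).filter
        (fun z => (z % (2*(l:ℤ)) + (i:ℤ)) % (2*(l:ℤ)) < (l:ℤ))).card = t := ⟨_, rfl⟩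
    obtain ⟨n2, hv2⟩ : ∃ t, ((Finset.Icc (0:ℤ) (M p + b)).filter
        (fun z => z % (2*(l:ℤ)) < (l:ℤ) ∧ (z % (2*(l:ℤ)) + (i:ℤ)) % (2*(l:ℤ)) < (l:ℤ))
        \ Finset.Icc (0:ℤ) b).card = t := ⟨_, rfl⟩
    obtain ⟨n3, hv3⟩ : ∃ t, ((Finset.Icc (0:ℤ) (M p + b)).filter
        (fun z => z % (2*(l:ℤ)) < (l:ℤ)) \ Finset.Icc (0:ℤ) b).card = t := ⟨_, rfl⟩
    obtain ⟨nB, hvB⟩ : ∃ t, (Finset.Icc (0:ℤ) b).card = t := ⟨_, rfl⟩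
    simp only [hv1, hv2, hv3, hvB] at hSB hSCB hG ⊢
    have hBv : ((nB:ℕ) : ℝ) = ((b:ℤ):ℝ) + 1 := by
      have : ((nB:ℕ) : ℤ) = b + 1 := by rw [← hvB, Int.card_Icc]; omega
      exact_mod_cast this
    obtain ⟨hSB1, hSB2⟩ := hSB
    obtain ⟨hG1, hG2⟩ := hG
    obtain ⟨hSCB1, hSCB2⟩ := hSCB
    clear hv1 hv2 hv3 hvB hSBset hSCBset hA hA2 hmax hrec hMlb hodd heven hbfacts hMsq
    push_cast
    rw [hBv]
    have rn3 : (0:ℝ) ≤ ((n3:ℕ):ℝ) := Nat.cast_nonneg n3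
    have rSB1 : (l:ℝ)*(((b:ℤ):ℝ)+1-2*(l:ℝ)) ≤ 2*(l:ℝ)*((n1:ℕ):ℝ) := by exact_mod_cast hSB1
    have rSCB1 : ((l:ℝ)-((i:ℕ):ℝ)) * ((((M p : ℤ):ℝ) + ((b:ℤ):ℝ)) - ((b:ℤ):ℝ) - 4*(l:ℝ))
        ≤ 2*(l:ℝ)*((n2:ℕ):ℝ) := by exact_mod_cast hSCB1
    have rG2 : 2*(l:ℝ)*((n3:ℕ):ℝ)
        ≤ (l:ℝ)*((((M p : ℤ):ℝ) + ((b:ℤ):ℝ)) - ((b:ℤ):ℝ) + 4*(l:ℝ)) := by exact_mod_cast hG2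
    have hkey1 : lam * (2*(((b:ℤ):ℝ)+1) + ((M p : ℤ):ℝ) + 4*(l:ℝ))
        ≤ (((M p : ℤ):ℝ)/4 - 7*(l:ℝ)) * (5*(4+lam)) := by
      nlinarith [rb, rml2, rm, hlR3, hlam.le, rl]
    have hA4 : lam/(5*(4+lam)) * (2*(((b:ℤ):ℝ)+1) + ((M p : ℤ):ℝ) + 4*(l:ℝ)) + 7*(l:ℝ)
        ≤ ((M p : ℤ):ℝ)/4 := by
      have h2 : lam/(5*(4+lam)) * (2*(((b:ℤ):ℝ)+1) + ((M p : ℤ):ℝ) + 4*(l:ℝ))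
          = lam * (2*(((b:ℤ):ℝ)+1) + ((M p : ℤ):ℝ) + 4*(l:ℝ)) / (5*(4+lam)) := by ring
      have h3 : lam * (2*(((b:ℤ):ℝ)+1) + ((M p : ℤ):ℝ) + 4*(l:ℝ)) / (5*(4+lam))
          ≤ ((M p : ℤ):ℝ)/4 - 7*(l:ℝ) := by
        rw [div_le_iff₀ h54]; linarith
      linarith [h2.le, h2.ge, h3]
    have hkey : (1/2 + lam/(5*(4+lam))) * (2*(((b:ℤ):ℝ)+1) + ((M p : ℤ):ℝ) + 4*(l:ℝ))
        ≤ (((b:ℤ):ℝ)+1) - 2*(l:ℝ) + (3/4)*(((M p : ℤ):ℝ) - 4*(l:ℝ)) := by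
      nlinarith [hA4, sq_nonneg (1:ℝ)]
    have hli : (0:ℝ) ≤ (l:ℝ) - 4*((i:ℕ):ℝ) := by linarith
    have hM4 : (0:ℝ) ≤ ((M p : ℤ):ℝ) - 4*(l:ℝ) := by linarith
    have hs2low : (3/4)*(l:ℝ)*(((M p : ℤ):ℝ) - 4*(l:ℝ)) ≤ 2*(l:ℝ)*((n2:ℕ):ℝ) := by
      nlinarith [rSCB1, mul_nonneg hli hM4]
    have hbeta : (0:ℝ) < 1/2 + lam/(5*(4+lam)) := by positivity
    have htu : 2*(l:ℝ)*((((b:ℤ):ℝ)+1) + ((n3:ℕ):ℝ))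
        ≤ (l:ℝ)*(2*(((b:ℤ):ℝ)+1) + ((M p : ℤ):ℝ) + 4*(l:ℝ)) := by linarith [rG2]
    have hchain : (1/2 + lam/(5*(4+lam))) * (2*(l:ℝ)*((((b:ℤ):ℝ)+1) + ((n3:ℕ):ℝ)))
        ≤ 2*(l:ℝ)*(((n1:ℕ):ℝ) + ((n2:ℕ):ℝ)) := by
      have c2 := mul_le_mul_of_nonneg_left htu hbeta.le
      have c3 := mul_le_mul_of_nonneg_left hkey hl0R.le
      nlinarith [c2, c3, hSB1, hs2low]
    have hTpos : (0:ℝ) < ((b:ℤ):ℝ) + 1 + ((n3:ℕ):ℝ) := by linarith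
    rw [one_div_mul_eq_div, le_div_iff₀ hTpos]
    have hfin := le_of_mul_le_mul_left
      (by linarith [hchain] : 2*(l:ℝ)*((1/2 + lam/(5*(4+lam))) * (((b:ℤ):ℝ) + 1 + ((n3:ℕ):ℝ)))
        ≤ 2*(l:ℝ)*(((n1:ℕ):ℝ) + ((n2:ℕ):ℝ))) h2l
    linarith [hfin]
end

section
/- Let G be a group, (F_n) a sequence of finite subsets satisfying |F_n \ F_n f| ≤ (ε/2)|F_n| for all relevant f, and suppose (F_{n_j} g_j)_{j=1}^m is an (ε/2)-disjoint collection where for each j there is c_j with |F_{n_j} g_j △ F_{n_j} c_j| ≤ (ε/2)|F_{n_j}|. Then the collection (F_{n_j} c_j)_{j=1}^m is ε-disjoint, and |⋃_j F_{n_j} c_j ∩ ⋃_j F_{n_j} g_j| ≥ (1-ε) |⋃_j F_{n_j} g_j|. -/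
open scoped Pointwise symmDiff
open Finset

theorem fluctuations_stmt12 {G : Type*} [Group G] [DecidableEq G]
    (ε : ℝ) (hε0 : 0 < ε) (hε : ε ≤ 1 / 2)
    (m : ℕ) (F : ℕ → Finset G) (n : ℕ → ℕ) (g c : ℕ → G)
    (E : ℕ → Finset G)
    (hEsub : ∀ j < m, E j ⊆ F (n j) * {g j})
    (hEcard : ∀ j < m, (1 - ε / 2) * ((F (n j)).card : ℝ) ≤ ((E j).card : ℝ))
    (hEdisj : ∀ j < m, ∀ j' < m, j ≠ j' → Disjoint (E j) (E j'))
    (hclose : ∀ j < m,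
      (((F (n j) * {g j}) ∆ (F (n j) * {c j})).card : ℝ) ≤ ε / 2 * (F (n j)).card) :
    (∃ E' : ℕ → Finset G,
      (∀ j < m, E' j ⊆ F (n j) * {c j} ∧
        (1 - ε) * ((F (n j)).card : ℝ) ≤ ((E' j).card : ℝ)) ∧
      ∀ j < m, ∀ j' < m, j ≠ j' → Disjoint (E' j) (E' j')) ∧
    (1 - ε) * ((((Finset.range m).biUnion fun j => F (n j) * {g j}).card : ℝ)) ≤
      (((((Finset.range m).biUnion fun j => F (n j) * {c j}) ∩
          ((Finset.range m).biUnion fun j => F (n j) * {g j})).card : ℝ)) := by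
  -- difference bound: |Fg_j \ Fc_j| ≤ ε/2 |F|
  have hdiff : ∀ j < m,
      (((F (n j) * {g j}) \ (F (n j) * {c j})).card : ℝ) ≤ ε / 2 * (F (n j)).card := by
    intro j hj
    refine le_trans ?_ (hclose j hj)
    have hsub : (F (n j) * {g j}) \ (F (n j) * {c j}) ⊆ (F (n j) * {g j}) ∆ (F (n j) * {c j}) :=
      fun x hx => by rw [symmDiff_def]; exact mem_union_left _ hx
    exact_mod_cast Nat.cast_le.mpr (card_le_card hsub)
  constructor
  · refine ⟨fun j => E j ∩ (F (n j) * {c j}), fun j hj => ⟨inter_subset_right, ?_⟩,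
      fun j hj j' hj' hne => ((hEdisj j hj j' hj' hne).mono inter_subset_left inter_subset_left)⟩
    have h1 : (E j).card ≤ (E j ∩ (F (n j) * {c j})).card + ((F (n j) * {g j}) \ (F (n j) * {c j})).card := by
      have : E j ⊆ (E j ∩ (F (n j) * {c j})) ∪ ((F (n j) * {g j}) \ (F (n j) * {c j})) := by
        intro x hx
        by_cases hc : x ∈ F (n j) * {c j}
        · exact mem_union_left _ (mem_inter.mpr ⟨hx, hc⟩)
        · exact mem_union_right _ (mem_sdiff.mpr ⟨hEsub j hj hx, hc⟩)
      exact (card_le_card this).trans (card_union_le _ _)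
    have h1' : ((E j).card : ℝ) ≤ ((E j ∩ (F (n j) * {c j})).card : ℝ) + (((F (n j) * {g j}) \ (F (n j) * {c j})).card : ℝ) := by
      exact_mod_cast h1
    nlinarith [hEcard j hj, h1', hdiff j hj, (Nat.cast_nonneg (F (n j)).card : (0:ℝ) ≤ ((F (n j)).card : ℝ))]
  · set A := (Finset.range m).biUnion fun j => F (n j) * {g j} with hA
    set B := (Finset.range m).biUnion fun j => F (n j) * {c j} with hB
    set S : ℝ := ∑ j ∈ Finset.range m, ((F (n j)).card : ℝ) with hS
    have hSA : (1 - ε / 2) * S ≤ (A.card : ℝ) := by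
      have hsub : (Finset.range m).biUnion E ⊆ A := by
        intro x hx
        obtain ⟨j, hj, hxj⟩ := mem_biUnion.mp hx
        exact mem_biUnion.mpr ⟨j, hj, hEsub j (mem_range.mp hj) hxj⟩
      have hcard : ∑ j ∈ Finset.range m, (E j).card = ((Finset.range m).biUnion E).card :=
        (card_biUnion (fun j hj j' hj' hne => hEdisj j (mem_range.mp hj) j' (mem_range.mp hj') hne)).symm
      have : ∑ j ∈ Finset.range m, ((E j).card : ℝ) ≤ (A.card : ℝ) := by
        rw [← Nat.cast_sum, hcard]
        exact_mod_cast card_le_card hsub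
      calc (1 - ε / 2) * S = ∑ j ∈ Finset.range m, (1 - ε / 2) * ((F (n j)).card : ℝ) := by
            rw [hS, mul_sum]
        _ ≤ ∑ j ∈ Finset.range m, ((E j).card : ℝ) :=
            sum_le_sum fun j hj => hEcard j (mem_range.mp hj)
        _ ≤ _ := this
    have hABdiff : ((A \ B).card : ℝ) ≤ ε / 2 * S := by
      have hsub : A \ B ⊆ (Finset.range m).biUnion fun j => (F (n j) * {g j}) \ (F (n j) * {c j}) := by
        intro x hx
        obtain ⟨hxA, hxB⟩ := mem_sdiff.mp hx
        obtain ⟨j, hj, hxj⟩ := mem_biUnion.mp hxA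
        refine mem_biUnion.mpr ⟨j, hj, mem_sdiff.mpr ⟨hxj, fun hc => hxB (mem_biUnion.mpr ⟨j, hj, hc⟩)⟩⟩
      calc ((A \ B).card : ℝ)
          ≤ ((((Finset.range m).biUnion fun j => (F (n j) * {g j}) \ (F (n j) * {c j})).card : ℝ)) := by
            exact_mod_cast card_le_card hsub
        _ ≤ ∑ j ∈ Finset.range m, (((F (n j) * {g j}) \ (F (n j) * {c j})).card : ℝ) := by
            exact_mod_cast card_biUnion_le
        _ ≤ ∑ j ∈ Finset.range m, ε / 2 * ((F (n j)).card : ℝ) :=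
            sum_le_sum fun j hj => hdiff j (mem_range.mp hj)
        _ = ε / 2 * S := by rw [hS, mul_sum]
    have hsplit : (A.card : ℝ) = ((B ∩ A).card : ℝ) + ((A \ B).card : ℝ) := by
      rw [inter_comm]
      exact_mod_cast (Finset.card_inter_add_card_sdiff A B).symm
    have hS0 : 0 ≤ S := Finset.sum_nonneg fun j _ => Nat.cast_nonneg _
    nlinarith [hSA, hABdiff, hsplit, (Nat.cast_nonneg (B ∩ A).card : (0:ℝ) ≤ (((B ∩ A).card : ℝ)))]
end

section
/- Let 0 < α < β, 0 < ε < 1/4, f : G → [0, S], x arbitrary (absorbed into f). Suppose (F_n c)_{(c,n)∈𝓑} is an (ε/2)-disjoint collection of finite subsets of a group G such that for each (c,n) ∈ 𝓑 the average (1/|F_n|)∑_{g∈F_n c} f(g) ≥ β. Then ∑_{g ∈ C} f(g) ≥ |C|(β - (ε/2)S), where C = ⋃_{(c,n)∈𝓑} F_n c. -/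
open scoped Pointwise
open Finset

theorem fluctuations_stmt13 {G : Type*} [Group G] [DecidableEq G]
    (S α β ε : ℝ) (hS : 0 < S) (hα : 0 < α) (hαβ : α < β)
    (hε0 : 0 < ε) (hε : ε < 1 / 4)
    (f : G → ℝ) (hf0 : ∀ g, 0 ≤ f g) (hfS : ∀ g, f g ≤ S)
    (𝓑 : Finset (G × ℕ)) (F : ℕ → Finset G)
    (E : G × ℕ → Finset G)
    (hEsub : ∀ p ∈ 𝓑, E p ⊆ F p.2 * {p.1})
    (hEcard : ∀ p ∈ 𝓑, (1 - ε / 2) * ((F p.2).card : ℝ) ≤ ((E p).card : ℝ))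
    (hEdisj : ∀ p ∈ 𝓑, ∀ p' ∈ 𝓑, p ≠ p' → Disjoint (E p) (E p'))
    (havg : ∀ p ∈ 𝓑, β * ((F p.2).card : ℝ) ≤ ∑ g ∈ F p.2 * {p.1}, f g) :
    (((𝓑.biUnion fun p => F p.2 * {p.1}).card : ℝ)) * (β - ε / 2 * S) ≤
      ∑ g ∈ 𝓑.biUnion (fun p => F p.2 * {p.1}), f g := by
  set C := 𝓑.biUnion fun p => F p.2 * {p.1} with hC
  have hsumC_nonneg : (0:ℝ) ≤ ∑ g ∈ C, f g := Finset.sum_nonneg fun g _ => hf0 g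
  rcases le_or_gt (β - ε / 2 * S) 0 with hk | hk
  · exact le_trans (mul_nonpos_of_nonneg_of_nonpos (by positivity) hk) hsumC_nonneg
  · have key : ∀ p ∈ 𝓑, ((F p.2).card : ℝ) * (β - ε / 2 * S) ≤ ∑ g ∈ E p, f g := by
      intro p hp
      have hcardmul : (F p.2 * ({p.1} : Finset G)).card = (F p.2).card :=
        Finset.card_mul_singleton _ _
      have hcardle : (E p).card ≤ (F p.2 * {p.1}).card := Finset.card_le_card (hEsub p hp)
      have hsd : ∑ g ∈ (F p.2 * {p.1}) \ E p, f g
          ≤ S * (((F p.2).card : ℝ) - (E p).card) := by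
        calc ∑ g ∈ (F p.2 * {p.1}) \ E p, f g
            ≤ ∑ _g ∈ (F p.2 * {p.1}) \ E p, S := Finset.sum_le_sum fun g _ => hfS g
          _ = (((F p.2 * {p.1}) \ E p).card : ℝ) * S := by
              rw [Finset.sum_const, nsmul_eq_mul]
          _ = S * (((F p.2).card : ℝ) - (E p).card) := by
              rw [Finset.card_sdiff_of_subset (hEsub p hp), Nat.cast_sub hcardle, hcardmul]
              ring
      have hsplit : ∑ g ∈ F p.2 * {p.1}, f g
          = ∑ g ∈ (F p.2 * {p.1}) \ E p, f g + ∑ g ∈ E p, f g :=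
        (Finset.sum_sdiff (hEsub p hp)).symm
      have hdiff : ((F p.2).card : ℝ) - (E p).card ≤ ε / 2 * (F p.2).card := by
        have := hEcard p hp; nlinarith
      have h1 := havg p hp
      have hS' : S * (((F p.2).card : ℝ) - (E p).card) ≤ S * (ε / 2 * (F p.2).card) :=
        mul_le_mul_of_nonneg_left hdiff hS.le
      nlinarith [hsplit, hsd]
    have hdisj : (↑𝓑 : Set (G × ℕ)).PairwiseDisjoint E := fun p hp q hq hpq =>
      hEdisj p hp q hq hpq
    have hsumE : ∑ p ∈ 𝓑, ∑ g ∈ E p, f g = ∑ g ∈ 𝓑.biUnion E, f g :=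
      (Finset.sum_biUnion hdisj).symm
    have hsub : 𝓑.biUnion E ⊆ C := by
      intro g hg
      rcases Finset.mem_biUnion.mp hg with ⟨p, hp, hgp⟩
      exact Finset.mem_biUnion.mpr ⟨p, hp, hEsub p hp hgp⟩
    have hcardC : (C.card : ℝ) ≤ ∑ p ∈ 𝓑, ((F p.2).card : ℝ) := by
      have := Finset.card_biUnion_le (s := 𝓑) (t := fun p => F p.2 * {p.1})
      calc (C.card : ℝ) ≤ ((∑ p ∈ 𝓑, (F p.2 * {p.1}).card : ℕ) : ℝ) := by exact_mod_cast this
        _ = ∑ p ∈ 𝓑, ((F p.2).card : ℝ) := by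
            push_cast
            exact Finset.sum_congr rfl fun p _ => by
              rw [Finset.card_mul_singleton]
    calc (C.card : ℝ) * (β - ε / 2 * S)
        ≤ (∑ p ∈ 𝓑, ((F p.2).card : ℝ)) * (β - ε / 2 * S) :=
          mul_le_mul_of_nonneg_right hcardC hk.le
      _ = ∑ p ∈ 𝓑, ((F p.2).card : ℝ) * (β - ε / 2 * S) := Finset.sum_mul ..
      _ ≤ ∑ p ∈ 𝓑, ∑ g ∈ E p, f g := Finset.sum_le_sum key
      _ = ∑ g ∈ 𝓑.biUnion E, f g := hsumE
      _ ≤ ∑ g ∈ C, f g :=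
          Finset.sum_le_sum_of_subset_of_nonneg hsub fun g _ _ => hf0 g
end

section
/- Let 0 < α, 0 < ε ≤ 1/2, and let (F_n c)_{(c,n)∈𝓑} be an ε-disjoint collection of finite subsets of a group G with union C'' = ⋃_{(c,n)∈𝓑} F_n c, such that for each (c,n) ∈ 𝓑, (1/|F_n|) ∑_{g ∈ F_n c} f(g) ≤ α, where f : G → [0, ∞). Then ∑_{g ∈ C''} f(g) ≤ (1/(1-ε)) |C''| α. -/
open scoped Pointwise
open Finset

lemma aux_sum_biUnion_le {ι β : Type*} [DecidableEq ι] [DecidableEq β] (s : Finset ι) (t : ι → Finset β)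
    (f : β → ℝ) (hf : ∀ b, 0 ≤ f b) :
    ∑ g ∈ s.biUnion t, f g ≤ ∑ i ∈ s, ∑ g ∈ t i, f g := by
  induction s using Finset.cons_induction with
  | empty => simp
  | cons a s ha ih =>
    rw [Finset.sum_cons, Finset.cons_eq_insert, Finset.biUnion_insert]
    have h := Finset.sum_union_inter (s₁ := t a) (s₂ := s.biUnion t) (f := f)
    have h2 : 0 ≤ ∑ g ∈ t a ∩ s.biUnion t, f g := Finset.sum_nonneg fun g _ => hf g
    linarith

theorem fluctuations_stmt14 {G : Type*} [Group G] [DecidableEq G]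
    (α ε : ℝ) (hα : 0 < α) (hε0 : 0 < ε) (hε : ε ≤ 1 / 2)
    (f : G → ℝ) (hf0 : ∀ g, 0 ≤ f g)
    (𝓑 : Finset (G × ℕ)) (F : ℕ → Finset G)
    (E : G × ℕ → Finset G)
    (hEsub : ∀ p ∈ 𝓑, E p ⊆ F p.2 * {p.1})
    (hEcard : ∀ p ∈ 𝓑, (1 - ε) * ((F p.2).card : ℝ) ≤ ((E p).card : ℝ))
    (hEdisj : ∀ p ∈ 𝓑, ∀ p' ∈ 𝓑, p ≠ p' → Disjoint (E p) (E p'))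
    (havg : ∀ p ∈ 𝓑, ∑ g ∈ F p.2 * {p.1}, f g ≤ α * ((F p.2).card : ℝ)) :
    ∑ g ∈ 𝓑.biUnion (fun p => F p.2 * {p.1}), f g ≤
      (1 / (1 - ε)) * (((𝓑.biUnion fun p => F p.2 * {p.1}).card : ℝ)) * α := by
  have hε1 : (0:ℝ) < 1 - ε := by linarith
  have h1 : ∑ g ∈ 𝓑.biUnion (fun p => F p.2 * {p.1}), f g ≤
      ∑ p ∈ 𝓑, ∑ g ∈ F p.2 * {p.1}, f g :=
    aux_sum_biUnion_le _ _ _ hf0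
  have h2 : ∑ p ∈ 𝓑, ∑ g ∈ F p.2 * {p.1}, f g ≤
      ∑ p ∈ 𝓑, α * ((F p.2).card : ℝ) :=
    Finset.sum_le_sum havg
  have h3 : ∀ p ∈ 𝓑, α * ((F p.2).card : ℝ) ≤ (1/(1-ε)) * α * ((E p).card : ℝ) := by
    intro p hp
    have h := hEcard p hp
    rw [div_mul_eq_mul_div, div_mul_eq_mul_div, le_div_iff₀ hε1]
    nlinarith [hα.le]
  have h4 : ∑ p ∈ 𝓑, ((E p).card : ℝ) = ((𝓑.biUnion E).card : ℝ) := by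
    rw [Finset.card_biUnion hEdisj]
    push_cast; ring
  have h5 : 𝓑.biUnion E ⊆ 𝓑.biUnion (fun p => F p.2 * {p.1}) := by
    intro g hg
    rw [Finset.mem_biUnion] at hg ⊢
    obtain ⟨p, hp, hgp⟩ := hg
    exact ⟨p, hp, hEsub p hp hgp⟩
  calc ∑ g ∈ 𝓑.biUnion (fun p => F p.2 * {p.1}), f g
        ≤ ∑ p ∈ 𝓑, α * ((F p.2).card : ℝ) := h1.trans h2
      _ ≤ ∑ p ∈ 𝓑, (1/(1-ε)) * α * ((E p).card : ℝ) := Finset.sum_le_sum h3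
      _ = (1/(1-ε)) * α * ((𝓑.biUnion E).card : ℝ) := by
          rw [← Finset.mul_sum, h4]
      _ ≤ (1/(1-ε)) * α * (((𝓑.biUnion fun p => F p.2 * {p.1}).card : ℝ)) := by
          have := Finset.card_le_card h5
          have hpos : 0 ≤ (1/(1-ε)) * α := by positivity
          exact mul_le_mul_of_nonneg_left (by exact_mod_cast this) hpos
      _ = (1 / (1 - ε)) * (((𝓑.biUnion fun p => F p.2 * {p.1}).card : ℝ)) * α := by ring
end

section
/- (Transference bound) Let G be a countable amenable group acting on (X, μ) by measure-preserving maps, f measurable, D ⊆ X measurable and invariant in the sense used below, Ω ⊆ G finite, and B = {g ∈ Ω : ⋃_{n=1}^M F_n g ⊆ Ω}. If for every x ∈ X the set C_{x} = {c ∈ B : T_c x ∈ D} satisfies |C_x| ≤ K|Ω|, then μ(D) ≤ K + (1 - |B|/|Ω|). -/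
open scoped Pointwise
open Finset MeasureTheory

attribute [local instance] Classical.propDecidable

theorem fluctuations_stmt19 {G X : Type*} [Group G] [Countable G] [DecidableEq G]
    [MeasurableSpace X] (μ : Measure X) [IsProbabilityMeasure μ]
    (T : G → X → X) (hmp : ∀ g, MeasurePreserving (T g) μ μ)
    (D : Set X) (hD : MeasurableSet D)
    (M : ℕ) (F : ℕ → Finset G)
    (Ω : Finset G) (hΩ : Ω.Nonempty) (K : ℝ) (hK : 0 ≤ K)
    (B : Finset G)
    (hB : B = Ω.filter fun g => ∀ n ∈ Finset.Icc 1 M, F n * {g} ⊆ Ω)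
    (hC : ∀ x : X, (((B.filter fun c => T c x ∈ D).card : ℝ)) ≤ K * Ω.card) :
    (μ D).toReal ≤ K + (1 - (B.card : ℝ) / Ω.card) := by
  have hBΩ : B ⊆ Ω := by rw [hB]; exact Finset.filter_subset _ _
  have hΩpos : (0:ℝ) < Ω.card := by exact_mod_cast Finset.card_pos.mpr hΩ
  have hmeas : ∀ g : G, MeasurableSet (T g ⁻¹' D) := fun g => (hmp g).measurable hD
  have hint : ∀ g : G, Integrable ((T g ⁻¹' D).indicator (fun _ => (1:ℝ))) μ :=
    fun g => (integrable_const 1).indicator (hmeas g)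
  have hfeq : (fun x => ((Ω.filter fun g => T g x ∈ D).card : ℝ))
      = fun x => ∑ g ∈ Ω, (T g ⁻¹' D).indicator (fun _ => (1:ℝ)) x := by
    funext x
    rw [Finset.card_filter]
    push_cast
    refine Finset.sum_congr rfl fun g _ => ?_
    simp [Set.indicator_apply, Set.mem_preimage]
  have hintf : Integrable (fun x => ((Ω.filter fun g => T g x ∈ D).card : ℝ)) μ := by
    rw [hfeq]; exact integrable_finset_sum _ (fun g _ => hint g)
  have hintval : ∫ x, ((Ω.filter fun g => T g x ∈ D).card : ℝ) ∂μ
      = Ω.card * (μ D).toReal := by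
    rw [hfeq, integral_finset_sum _ (fun g _ => hint g)]
    have : ∀ g ∈ Ω, ∫ x, (T g ⁻¹' D).indicator (fun _ => (1:ℝ)) x ∂μ = (μ D).toReal := by
      intro g _
      rw [integral_indicator (hmeas g)]
      simp [measureReal_def, (hmp g).measure_preimage hD.nullMeasurableSet]
    rw [Finset.sum_congr rfl this, Finset.sum_const, nsmul_eq_mul]
  have hbound : ∀ x, ((Ω.filter fun g => T g x ∈ D).card : ℝ)
      ≤ K * Ω.card + ((Ω.card : ℝ) - B.card) := by
    intro x
    have hsub : Ω.filter (fun g => T g x ∈ D) ⊆ (B.filter fun g => T g x ∈ D) ∪ (Ω \ B) := by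
      intro g hg
      simp only [Finset.mem_filter, Finset.mem_union, Finset.mem_sdiff] at hg ⊢
      by_cases hgB : g ∈ B
      · exact Or.inl ⟨hgB, hg.2⟩
      · exact Or.inr ⟨hg.1, hgB⟩
    have h1 : (Ω.filter (fun g => T g x ∈ D)).card
        ≤ (B.filter fun g => T g x ∈ D).card + (Ω \ B).card :=
      le_trans (Finset.card_le_card hsub) (Finset.card_union_le _ _)
    have h2 : ((Ω \ B).card : ℝ) = (Ω.card : ℝ) - B.card := by
      rw [Finset.card_sdiff_of_subset hBΩ, Nat.cast_sub (Finset.card_le_card hBΩ)]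
    calc ((Ω.filter fun g => T g x ∈ D).card : ℝ)
        ≤ ((B.filter fun g => T g x ∈ D).card : ℝ) + ((Ω \ B).card : ℝ) := by exact_mod_cast h1
      _ ≤ K * Ω.card + ((Ω.card : ℝ) - B.card) := by
          rw [h2]; exact add_le_add_left (hC x) _
  have hIle : (Ω.card : ℝ) * (μ D).toReal ≤ K * Ω.card + ((Ω.card : ℝ) - B.card) := by
    rw [← hintval]
    calc ∫ x, ((Ω.filter fun g => T g x ∈ D).card : ℝ) ∂μ
        ≤ ∫ _, (K * Ω.card + ((Ω.card : ℝ) - B.card)) ∂μ :=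
          integral_mono hintf (integrable_const _) hbound
      _ = K * Ω.card + ((Ω.card : ℝ) - B.card) := by simp
  have : (μ D).toReal ≤ (K * Ω.card + ((Ω.card : ℝ) - B.card)) / Ω.card := by
    rw [le_div_iff₀ hΩpos, mul_comm]; exact hIle
  calc (μ D).toReal ≤ (K * Ω.card + ((Ω.card : ℝ) - B.card)) / Ω.card := this
    _ = K + (1 - (B.card : ℝ) / Ω.card) := by field_simp
end
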